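/- arXiv:2310.14882 — 10 statements merged into one kernel-verified Lean document; each statement's English description precedes it below -/
import Mathlib

section
/- For all integers A, R with 0 ≤ R < A, one has ∑_{j=0}^{A−R−1} C(2A, j) ≤ (A−R)/(2R+2) · C(2A, A−R), where C(n,k) denotes the binomial coefficient. -/
lemma aux_sum_choose (n : ℕ) : ∀ m : ℕ, 2 * m ≤ n →
    (∑ j ∈ Finset.range m, (Nat.choose n j : ℚ))
      ≤ (m : ℚ) / ((n : ℚ) - 2 * m + 2) * (Nat.choose n m : ℚ) := by
  intro m
  induction m with
  | zero => intro _; simp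
  | succ m ih =>
    intro h
    have h' : 2 * m ≤ n := by omega
    have hmn : m ≤ n := by omega
    have hd1 : (0:ℚ) < (n : ℚ) - 2 * m + 2 := by
      have : (2*m : ℕ) ≤ n := h'
      have := (Nat.cast_le (α := ℚ)).2 this
      push_cast at this
      linarith
    have hd2 : (0:ℚ) < (n : ℚ) - 2 * (m+1) + 2 := by
      have := (Nat.cast_le (α := ℚ)).2 h
      push_cast at this
      linarith
    have hC : (0:ℚ) ≤ (Nat.choose n m : ℚ) := by positivity
    have hrec : (Nat.choose n (m+1) : ℚ) * (m+1) = (Nat.choose n m : ℚ) * ((n:ℚ) - m) := by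
      have := Nat.choose_succ_right_eq n m
      have h2 : ((Nat.choose n (m+1) * (m+1) : ℕ) : ℚ) = ((Nat.choose n m * (n - m) : ℕ) : ℚ) := by
        exact_mod_cast congrArg (Nat.cast (R := ℚ)) this
      push_cast [Nat.cast_sub hmn] at h2
      push_cast
      linarith
    rw [Finset.sum_range_succ]
    have step : (m : ℚ) / ((n : ℚ) - 2 * m + 2) * (Nat.choose n m : ℚ) + (Nat.choose n m : ℚ)
        ≤ ((m+1 : ℕ) : ℚ) / ((n : ℚ) - 2 * (m+1) + 2) * (Nat.choose n (m+1) : ℚ) := by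
      push_cast
      rw [div_mul_eq_mul_div, div_mul_eq_mul_div, div_add' _ _ _ (ne_of_gt hd1),
        div_le_div_iff₀ hd1 hd2]
      have hm1 : (0:ℚ) < (m:ℚ) + 1 := by positivity
      nlinarith [mul_nonneg hC (le_of_lt hd2), mul_nonneg hC hm1.le]
    calc _ ≤ (m : ℚ) / ((n : ℚ) - 2 * m + 2) * (Nat.choose n m : ℚ) + (Nat.choose n m : ℚ) := by
            linarith [ih h']
      _ ≤ _ := by push_cast at step ⊢; linarith

/-- The bound (4.4)-(4.5) from the proof of Lemma 4.2 (tightness):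
for integers `0 ≤ R < A`, `∑_{j=0}^{A-R-1} C(2A, j) ≤ (A-R)/(2R+2) · C(2A, A-R)`. -/
theorem stmt_3 (A R : ℕ) (hRA : R < A) :
    (∑ j ∈ Finset.range (A - R), (Nat.choose (2 * A) j : ℚ))
      ≤ ((A : ℚ) - (R : ℚ)) / (2 * (R : ℚ) + 2) * (Nat.choose (2 * A) (A - R) : ℚ) := by
  have h := aux_sum_choose (2 * A) (A - R) (by omega)
  have hc : ((A - R : ℕ) : ℚ) = (A : ℚ) - (R : ℚ) := by
    push_cast [Nat.cast_sub hRA.le]; ring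
  rw [hc] at h
  have hden : ((2 * A : ℕ) : ℚ) - 2 * ((A:ℚ) - (R:ℚ)) + 2 = 2 * (R:ℚ) + 2 := by
    push_cast; ring
  rw [hden] at h
  exact h
end

section
/- For all integers A, R, x with 0 ≤ R < A and 1 ≤ x ≤ A−R, one has ∑_{x'=x}^{A−R} (R+x')·C(2A, A−R−x') = A·C(2A−1, A−R−x), where C(n,k) denotes the binomial coefficient. -/
lemma aux_step (A k : ℕ) (hk : k + 1 < A) :
    A * Nat.choose (2 * A - 1) k + (A - (k + 1)) * Nat.choose (2 * A) (k + 1)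
      = A * Nat.choose (2 * A - 1) (k + 1) := by
  have hA : 1 ≤ A := by omega
  have h2A : 2 * A - 1 + 1 = 2 * A := by omega
  have h1 : (k + 2) * Nat.choose (2 * A) (k + 2) = 2 * A * Nat.choose (2 * A - 1) (k + 1) := by
    have := Nat.add_one_mul_choose_eq (2 * A - 1) (k + 1)
    simp only [Nat.succ_eq_add_one, h2A] at this
    linarith
  have h2 : (k + 1) * Nat.choose (2 * A) (k + 1) = 2 * A * Nat.choose (2 * A - 1) k := by
    have := Nat.add_one_mul_choose_eq (2 * A - 1) k
    simp only [Nat.succ_eq_add_one, h2A] at this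
    linarith
  have h3 : Nat.choose (2 * A) (k + 2) * (k + 2) = Nat.choose (2 * A) (k + 1) * (2 * A - (k + 1)) :=
    Nat.choose_succ_right_eq (2 * A) (k + 1)
  have hk1 : k + 1 ≤ A := by omega
  have hk2 : k + 1 ≤ 2 * A := by omega
  apply Nat.eq_of_mul_eq_mul_left (show 0 < 2 by norm_num)
  zify [hk1, hk2] at h1 h2 h3 ⊢
  linarith

lemma aux_sum (A k : ℕ) (hk : k < A) :
    ∑ j ∈ Finset.range (k + 1), (A - j) * Nat.choose (2 * A) j
      = A * Nat.choose (2 * A - 1) k := by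
  induction k with
  | zero => simp
  | succ n ih =>
    rw [Finset.sum_range_succ, ih (by omega)]
    exact aux_step A n hk

/-- Closed form for partial sums of the weights `(R+x')·C(2A, A-R-x')`,
equivalent to the tail-probability formula of Theorem 2.1(4):
for integers `0 ≤ R < A` and `1 ≤ x ≤ A-R`,
`∑_{x'=x}^{A-R} (R+x')·C(2A, A-R-x') = A·C(2A-1, A-R-x)`. -/
theorem stmt_4 (A R x : ℕ) (hRA : R < A) (hx : 1 ≤ x) (hxA : x ≤ A - R) :
    ∑ x' ∈ Finset.Icc x (A - R), (R + x') * Nat.choose (2 * A) (A - R - x')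
      = A * Nat.choose (2 * A - 1) (A - R - x) := by
  have key : ∑ x' ∈ Finset.Icc x (A - R), (R + x') * Nat.choose (2 * A) (A - R - x')
      = ∑ j ∈ Finset.range (A - R - x + 1), (A - j) * Nat.choose (2 * A) j := by
    apply Finset.sum_nbij' (i := fun x' => A - R - x') (j := fun j => A - R - j)
    · intro a ha
      simp only [Finset.mem_Icc] at ha
      simp only [Finset.mem_range]
      omega
    · intro a ha
      simp only [Finset.mem_range] at ha
      simp only [Finset.mem_Icc]
      omega
    · intro a ha
      simp only [Finset.mem_Icc] at ha
      omega
    · intro a ha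
      simp only [Finset.mem_range] at ha
      omega
    · intro a ha
      simp only [Finset.mem_Icc] at ha
      congr 1
      omega
  rw [key]
  exact aux_sum A (A - R - x) (by omega)
end

section
/- Let U, V_1, V_2, V_3, … be independent random variables, each uniformly distributed on (0,1). Let N be the smallest integer n ≥ 2 such that U lies strictly between V_n and V_j for some 1 ≤ j < n (equivalently, such that V_n and V_1 lie on opposite sides of U). Then N is almost surely finite and P(N = n) = 2/(n(n+1)) for every n ≥ 2. -/
/-!
Conditionally on `U = u`, the `V_i` are i.i.d. and each lies below `u` with probability `u`.
Outside the null event that some `V_i` equals `U`, `N = n` means exactly that `V_1, …, V_{n-1}`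
lie on one side of `U` and `V_n` on the other, an event of probability
`∫₀¹ (u^(n-1) (1 - u) + (1 - u)^(n-1) u) du = 2 / (n (n + 1))`.
These probabilities telescope to `1`, so `N` is almost surely finite.
-/

open MeasureTheory ProbabilityTheory Set Function

theorem ProbabilityTheory.iIndepFun.measure_forall_mem_eq_lintegral_prod
    {ι β Ω : Type*} [MeasurableSpace Ω] [MeasurableSpace β] {P : Measure Ω}
    {X : ι → Ω → β} (hX : ∀ i, Measurable (X i)) (hindep : iIndepFun X P)
    {i₀ : ι} {T : Finset ι} (hi₀ : i₀ ∉ T) {s : ι → β → Set β}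
    (hs : ∀ i, MeasurableSet {p : β × β | p.2 ∈ s i p.1}) :
    P {ω | ∀ i ∈ T, X i ω ∈ s i (X i₀ ω)}
      = ∫⁻ u, ∏ i ∈ T, P.map (X i) (s i u) ∂P.map (X i₀) := by
  classical
  have := hindep.isProbabilityMeasure
  let Y : Ω → T → β := fun ω i => X i ω
  have hY : Measurable Y := measurable_pi_lambda _ fun i => hX i
  have hXY : IndepFun (X i₀) Y P := by
    have h := hindep.indepFun_finset {i₀} T (Finset.disjoint_singleton_left.2 hi₀) hX
    exact h.comp (measurable_pi_apply ⟨i₀, Finset.mem_singleton_self _⟩) measurable_id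
  let C : Set (β × (T → β)) := {p | ∀ i : T, p.2 i ∈ s i p.1}
  have hC : MeasurableSet C := by
    simp only [C, ofPred_forall]
    exact .iInter fun i => (hs i).preimage
      (measurable_fst.prodMk ((measurable_pi_apply i).comp measurable_snd))
  have hslice (u : β) : P.map Y (Prod.mk u ⁻¹' C) = ∏ i ∈ T, P.map (X i) (s i u) := by
    have hsu (i : ι) : MeasurableSet (s i u) := (hs i).preimage measurable_prodMk_left
    have hpre : Y ⁻¹' (Prod.mk u ⁻¹' C) = ⋂ i ∈ T, X i ⁻¹' s i u := by
      ext; simp [Y, C]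
    rw [Measure.map_apply hY (hC.preimage measurable_prodMk_left), hpre,
      hindep.meas_biInter fun i _ => ⟨s i u, hsu i, rfl⟩]
    exact Finset.prod_congr rfl fun i _ => (Measure.map_apply (hX i) (hsu i)).symm
  calc P {ω | ∀ i ∈ T, X i ω ∈ s i (X i₀ ω)}
      = P ((fun ω => (X i₀ ω, Y ω)) ⁻¹' C) := by congr 1; ext; simp [Y, C]
    _ = ((P.map (X i₀)).prod (P.map Y)) C := by
      rw [← (indepFun_iff_map_prod_eq_prod_map_map (hX i₀).aemeasurable
        hY.aemeasurable).1 hXY, Measure.map_apply ((hX i₀).prodMk hY) hC]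
    _ = ∫⁻ u, ∏ i ∈ T, P.map (X i) (s i u) ∂P.map (X i₀) := by
      rw [Measure.prod_apply hC]
      simp_rw [hslice]

theorem ProbabilityTheory.IndepFun.measure_eq_eq_zero {Ω β : Type*} [MeasurableSpace Ω]
    [MeasurableSpace β] [MeasurableEq β] {P : Measure Ω} [IsFiniteMeasure P] {Y Z : Ω → β}
    (h : IndepFun Y Z P) (hY : Measurable Y) (hZ : Measurable Z)
    [NullSingletonClass (P.map Z)] :
    P {ω | Y ω = Z ω} = 0 := by
  have hD : MeasurableSet {p : β × β | p.1 = p.2} :=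
    measurableSet_eq_fun measurable_fst measurable_snd
  have hslice (y : β) : Prod.mk y ⁻¹' {p : β × β | p.1 = p.2} = {y} := by ext; simp [eq_comm]
  change P ((fun ω => (Y ω, Z ω)) ⁻¹' {p : β × β | p.1 = p.2}) = 0
  rw [← Measure.map_apply (hY.prodMk hZ) hD,
    (indepFun_iff_map_prod_eq_prod_map_map hY.aemeasurable hZ.aemeasurable).1 h,
    Measure.prod_apply hD]
  simp [hslice]

theorem Finset.prod_Icc_ite_eq_last {M : Type*} [CommMonoid M] (m : ℕ) (a c : M) :
    ∏ i ∈ Finset.Icc 1 (m + 1), (if i = m + 1 then a else c) = c ^ m * a := by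
  rw [← Finset.Ico_add_one_right_eq_Icc, Finset.prod_Ico_succ_top (by omega), if_pos rfl]
  rw [Finset.prod_congr rfl fun i hi => if_neg (Finset.mem_Ico.1 hi).2.ne, Finset.prod_const,
    Nat.card_Ico, Nat.add_sub_cancel]

theorem hasSum_two_div_mul_succ :
    HasSum (fun k : ℕ => 2 / (((k + 2 : ℕ) : ℝ) * ((k + 2 : ℕ) + 1))) 1 := by
  have hpartial (m : ℕ) : ∑ k ∈ Finset.range m, 2 / (((k + 2 : ℕ) : ℝ) * ((k + 2 : ℕ) + 1))
      = 1 - 2 / ((m : ℝ) + 2) := by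
    have hterm (k : ℕ) : 2 / (((k + 2 : ℕ) : ℝ) * ((k + 2 : ℕ) + 1))
        = 2 / ((k : ℝ) + 2) - 2 / (((k + 1 : ℕ) : ℝ) + 2) := by
      push_cast
      field_simp
      ring
    simp_rw [hterm]
    rw [Finset.sum_range_sub' (fun k : ℕ => 2 / ((k : ℝ) + 2))]
    norm_num
  rw [hasSum_iff_tendsto_nat_of_nonneg fun k => by positivity]
  simp_rw [hpartial]
  simpa using (tendsto_const_nhds (x := (1 : ℝ))).sub
    ((tendsto_const_nhds (x := (2 : ℝ))).div_atTop
      (Filter.tendsto_atTop_add_const_right _ 2 (tendsto_natCast_atTop_atTop (R := ℝ))))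

def side (b : Bool) (u : ℝ) : Set ℝ := if b then Iio u else Ioi u

def sideLength (b : Bool) (u : ℝ) : ℝ := if b then u else 1 - u

theorem measurableSet_setOf_mem_side (b : Bool) :
    MeasurableSet {p : ℝ × ℝ | p.2 ∈ side b p.1} := by
  cases b
  · exact measurableSet_lt measurable_fst measurable_snd
  · exact measurableSet_lt measurable_snd measurable_fst

theorem volume_restrict_Ioo_side (b : Bool) {u : ℝ} (hu : u ∈ Ioo (0 : ℝ) 1) :
    volume.restrict (Ioo (0 : ℝ) 1) (side b u) = ENNReal.ofReal (sideLength b u) := by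
  obtain ⟨h0, h1⟩ := hu
  cases b
  · rw [side, if_neg Bool.false_ne_true, Measure.restrict_apply measurableSet_Ioi,
      Ioi_inter_Ioo, max_eq_left h0.le, Real.volume_Ioo, sideLength, if_neg Bool.false_ne_true]
  · rw [side, if_pos rfl, Measure.restrict_apply measurableSet_Iio, Iio_inter_Ioo,
      min_eq_left h1.le, Real.volume_Ioo, sideLength, if_pos rfl, sub_zero]

theorem sideLength_nonneg (b : Bool) {u : ℝ} (hu : u ∈ Ioo (0 : ℝ) 1) : 0 ≤ sideLength b u := by
  cases b <;> simp only [sideLength] <;> grind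

theorem continuous_sideLength (b : Bool) : Continuous (sideLength b) := by
  cases b
  · exact continuous_const.sub continuous_id
  · exact continuous_id

theorem integral_pow_mul_one_sub (n : ℕ) :
    ∫ u in (0 : ℝ)..1, u ^ n * (1 - u) = 1 / ((n + 1) * (n + 2)) := by
  have h (u : ℝ) : u ^ n * (1 - u) = u ^ n - u ^ (n + 1) := by ring
  simp_rw [h]
  rw [intervalIntegral.integral_sub (intervalIntegral.intervalIntegrable_pow _)
    (intervalIntegral.intervalIntegrable_pow _), integral_pow, integral_pow]
  push_cast
  field_simp
  ring

theorem integral_sideLength_pow_mul (b : Bool) (n : ℕ) :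
    ∫ u in Ioo (0 : ℝ) 1, sideLength b u ^ n * sideLength (!b) u
      = 1 / ((n + 1) * (n + 2)) := by
  rw [← integral_Ioc_eq_integral_Ioo, ← intervalIntegral.integral_of_le zero_le_one]
  cases b
  · have h := intervalIntegral.integral_comp_sub_left (a := 0) (b := 1)
      (fun u : ℝ => u ^ n * (1 - u)) 1
    simp only [sub_sub_cancel, sub_zero, sub_self] at h
    simpa [sideLength, h] using integral_pow_mul_one_sub n
  · simpa [sideLength] using integral_pow_mul_one_sub n

def Separates (u x y : ℝ) : Prop := (x < u ∧ u < y) ∨ (y < u ∧ u < x)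

def crossingTimes (v : ℕ → ℝ) : Set ℕ :=
  {n | 2 ≤ n ∧ ∃ j, 1 ≤ j ∧ j < n ∧ Separates (v 0) (v j) (v n)}

def IsFirstCrossing (v : ℕ → ℝ) (n : ℕ) (b : Bool) : Prop :=
  (∀ i ∈ Finset.Ico 1 n, v i ∈ side b (v 0)) ∧ v n ∈ side (!b) (v 0)

section Sides

variable {b : Bool} {u x y : ℝ}

theorem Separates.symm (h : Separates u x y) : Separates u y x := Or.symm h

theorem separates_of_mem_side (hx : x ∈ side b u) (hy : y ∈ side (!b) u) : Separates u x y := by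
  cases b <;> simp_all [side, Separates]

theorem not_separates_of_mem_side (hx : x ∈ side b u) (hy : y ∈ side b u) :
    ¬Separates u x y := by
  cases b <;> simp only [side, Separates] at * <;> grind

theorem Separates.mem_side_not (h : Separates u x y) (hx : x ∈ side b u) :
    y ∈ side (!b) u := by
  cases b <;> simp only [side, Separates] at * <;> grind

theorem mem_side_not_of_notMem (hx : x ≠ u) (h : x ∉ side b u) : x ∈ side (!b) u := by
  cases b <;> simp only [side] at * <;> grind

theorem exists_mem_side (hx : x ≠ u) : ∃ b, x ∈ side b u := by
  by_cases h : x ∈ side true u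
  exacts [⟨true, h⟩, ⟨false, mem_side_not_of_notMem hx h⟩]

end Sides

section Crossing

variable {v : ℕ → ℝ} {n : ℕ} {b : Bool}

theorem isLeast_crossingTimes_of_isFirstCrossing (hn : 2 ≤ n) (h : IsFirstCrossing v n b) :
    IsLeast (crossingTimes v) n := by
  obtain ⟨hbefore, hlast⟩ := h
  refine ⟨⟨hn, 1, le_rfl, hn, separates_of_mem_side (hbefore 1 ?_) hlast⟩, ?_⟩
  · simp only [Finset.mem_Ico]; omega
  rintro m ⟨-, j, hj, hjm, hsep⟩
  by_contra! hmn
  exact not_separates_of_mem_side (hbefore j (Finset.mem_Ico.2 ⟨hj, by omega⟩))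
    (hbefore m (Finset.mem_Ico.2 ⟨by omega, hmn⟩)) hsep

theorem mem_crossingTimes_max {i j : ℕ} (hi : 1 ≤ i) (hj : 1 ≤ j) (hij : i ≠ j)
    (h : Separates (v 0) (v i) (v j)) : max i j ∈ crossingTimes v := by
  rcases lt_or_gt_of_ne hij with hlt | hlt
  · rw [max_eq_right hlt.le]; exact ⟨by omega, i, hi, hlt, h⟩
  · rw [max_eq_left hlt.le]; exact ⟨by omega, j, hj, hlt, h.symm⟩

theorem exists_isFirstCrossing_of_isLeast (hv : ∀ i, i ≠ 0 → v i ≠ v 0)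
    (h : IsLeast (crossingTimes v) n) : ∃ b, IsFirstCrossing v n b := by
  obtain ⟨⟨hn, j, hj, hjn, hsep⟩, hleast⟩ := h
  obtain ⟨b, hb⟩ := exists_mem_side (hv j (by omega))
  refine ⟨b, fun i hi => ?_, hsep.mem_side_not hb⟩
  obtain ⟨hi, hin⟩ := Finset.mem_Ico.1 hi
  by_contra hib
  have hij : j ≠ i := by rintro rfl; exact hib hb
  have hmax := hleast (mem_crossingTimes_max hj hi hij
    (separates_of_mem_side hb (mem_side_not_of_notMem (hv i (by omega)) hib)))
  omega

theorem sInf_crossingTimes_eq_iff (hv : ∀ i, i ≠ 0 → v i ≠ v 0) (hn : 2 ≤ n) :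
    sInf (crossingTimes v) = n ↔ ∃ b, IsFirstCrossing v n b := by
  refine ⟨fun h => exists_isFirstCrossing_of_isLeast hv ?_, fun ⟨b, h⟩ =>
    (isLeast_crossingTimes_of_isFirstCrossing hn h).csInf_eq⟩
  have hne : (crossingTimes v).Nonempty := Nat.nonempty_of_pos_sInf (by omega)
  exact h ▸ isLeast_csInf hne

theorem isFirstCrossing_iff_forall_Icc (hn : 1 ≤ n) :
    IsFirstCrossing v n b ↔ ∀ i ∈ Finset.Icc 1 n, v i ∈ side (if i = n then !b else b) (v 0) := by
  simp only [IsFirstCrossing, Finset.mem_Ico, Finset.mem_Icc]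
  refine ⟨fun ⟨hbefore, hlast⟩ i hi => ?_, fun h => ⟨fun i hi => ?_, ?_⟩⟩
  · rcases hi.2.lt_or_eq with hin | rfl
    · rw [if_neg hin.ne]; exact hbefore i ⟨hi.1, hin⟩
    · rwa [if_pos rfl]
  · simpa [hi.2.ne] using h i ⟨hi.1, hi.2.le⟩
  · simpa using h n ⟨hn, le_rfl⟩

section Uniform

variable {Ω : Type*} [MeasurableSpace Ω] {P : Measure Ω} {X : ℕ → Ω → ℝ}

theorem measurableSet_isFirstCrossing (hmeas : ∀ i, Measurable (X i)) (n : ℕ) (b : Bool) :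
    MeasurableSet {ω | IsFirstCrossing (fun i => X i ω) n b} := by
  have hside (i : ℕ) (c : Bool) : MeasurableSet {ω | X i ω ∈ side c (X 0 ω)} :=
    (measurableSet_setOf_mem_side c).preimage ((hmeas 0).prodMk (hmeas i))
  simp only [IsFirstCrossing, ofPred_and]
  refine .inter ?_ (hside n _)
  simpa only [ofPred_forall] using Finset.measurableSet_biInter _ fun i _ => hside i b

theorem measure_isFirstCrossing (hmeas : ∀ i, Measurable (X i)) (hindep : iIndepFun X P)
    (hunif : ∀ i, P.map (X i) = volume.restrict (Ioo (0 : ℝ) 1)) {n : ℕ} (hn : 1 ≤ n)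
    (b : Bool) :
    P {ω | IsFirstCrossing (fun i => X i ω) n b} = ENNReal.ofReal (1 / (n * (n + 1))) := by
  obtain ⟨m, rfl⟩ := Nat.exists_eq_add_of_le' hn
  simp_rw [isFirstCrossing_iff_forall_Icc hn]
  rw [hindep.measure_forall_mem_eq_lintegral_prod hmeas (by simp)
    fun i => measurableSet_setOf_mem_side _, hunif]
  have hprod : ∀ u ∈ Ioo (0 : ℝ) 1,
      ∏ i ∈ Finset.Icc 1 (m + 1), P.map (X i) (side (if i = m + 1 then !b else b) u)
        = ENNReal.ofReal (sideLength b u ^ m * sideLength (!b) u) := by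
    intro u hu
    simp_rw [hunif, apply_ite (fun c => volume.restrict (Ioo (0 : ℝ) 1) (side c u)),
      volume_restrict_Ioo_side _ hu, Finset.prod_Icc_ite_eq_last,
      ENNReal.ofReal_mul (pow_nonneg (sideLength_nonneg b hu) _),
      ENNReal.ofReal_pow (sideLength_nonneg b hu)]
  have hint : IntegrableOn (fun u => sideLength b u ^ m * sideLength (!b) u) (Ioo (0 : ℝ) 1) :=
    (((continuous_sideLength b).pow m).mul (continuous_sideLength !b)).integrableOn_Icc.mono_set
      Ioo_subset_Icc_self
  rw [setLIntegral_congr_fun measurableSet_Ioo hprod, ← ofReal_integral_eq_lintegral_ofReal hint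
    ((ae_restrict_iff' measurableSet_Ioo).2 (.of_forall fun u hu =>
      mul_nonneg (pow_nonneg (sideLength_nonneg b hu) _) (sideLength_nonneg _ hu))),
    integral_sideLength_pow_mul]
  push_cast
  ring_nf

theorem measurableSet_exists_isFirstCrossing (hmeas : ∀ i, Measurable (X i)) (n : ℕ) :
    MeasurableSet {ω | ∃ b, IsFirstCrossing (fun i => X i ω) n b} := by
  simpa only [ofPred_exists] using .iUnion (measurableSet_isFirstCrossing hmeas n)

theorem measure_exists_isFirstCrossing (hmeas : ∀ i, Measurable (X i)) (hindep : iIndepFun X P)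
    (hunif : ∀ i, P.map (X i) = volume.restrict (Ioo (0 : ℝ) 1)) {n : ℕ} (hn : 1 ≤ n) :
    P {ω | ∃ b, IsFirstCrossing (fun i => X i ω) n b}
      = ENNReal.ofReal (2 / (n * (n + 1))) := by
  have hdisj : Disjoint {ω | IsFirstCrossing (fun i => X i ω) n true}
      {ω | IsFirstCrossing (fun i => X i ω) n false} :=
    disjoint_left.2 fun ω htrue hfalse =>
      lt_asymm (show X 0 ω < X n ω from htrue.2) (show X n ω < X 0 ω from hfalse.2)
  have hunion : {ω | ∃ b, IsFirstCrossing (fun i => X i ω) n b}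
      = {ω | IsFirstCrossing (fun i => X i ω) n true}
        ∪ {ω | IsFirstCrossing (fun i => X i ω) n false} := by
    ext; simp only [mem_ofPred_eq, mem_union, Bool.exists_bool, or_comm]
  rw [hunion, measure_union hdisj (measurableSet_isFirstCrossing hmeas n _),
    measure_isFirstCrossing hmeas hindep hunif hn, measure_isFirstCrossing hmeas hindep hunif hn,
    ← ENNReal.ofReal_add (by positivity) (by positivity), ← add_div, one_add_one_eq_two]

theorem ae_forall_ne_apply_zero (hmeas : ∀ i, Measurable (X i)) (hindep : iIndepFun X P)
    (hunif : ∀ i, P.map (X i) = volume.restrict (Ioo (0 : ℝ) 1)) :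
    ∀ᵐ ω ∂P, ∀ i, i ≠ 0 → X i ω ≠ X 0 ω := by
  have := hindep.isProbabilityMeasure
  have : NullSingletonClass (P.map (X 0)) := by rw [hunif]; infer_instance
  refine ae_all_iff.2 fun i => ?_
  rcases eq_or_ne i 0 with rfl | hi
  · exact .of_forall fun _ h => absurd rfl h
  · filter_upwards [measure_eq_zero_iff_ae_notMem.1
      ((hindep.indepFun hi).measure_eq_eq_zero (hmeas i) (hmeas 0))] with ω hω _ using hω

end Uniform

/-- Theorem 2.1(2): with `U = X 0` and `V_i = X i` (`i ≥ 1`) i.i.d. uniform on `(0,1)`,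
the smallest `n ≥ 2` such that `U` lies strictly between `V_n` and `V_j` for some
`1 ≤ j < n` is almost surely finite and satisfies `P(N = n) = 2/(n(n+1))` for `n ≥ 2`. -/
theorem stmt_6 {Ω : Type*} [MeasurableSpace Ω] (P : Measure Ω) [IsProbabilityMeasure P]
    (X : ℕ → Ω → ℝ) (hmeas : ∀ i, Measurable (X i))
    (hindep : iIndepFun X P)
    (hunif : ∀ i, Measure.map (X i) P = volume.restrict (Set.Ioo (0 : ℝ) 1))
    (S : Ω → Set ℕ)
    (hS : ∀ ω, S ω = {n | 2 ≤ n ∧ ∃ j, 1 ≤ j ∧ j < n ∧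
      ((X j ω < X 0 ω ∧ X 0 ω < X n ω) ∨ (X n ω < X 0 ω ∧ X 0 ω < X j ω))})
    (N : Ω → ℕ) (hN : ∀ ω, N ω = sInf (S ω)) :
    P {ω | (S ω).Nonempty} = 1 ∧
      ∀ n : ℕ, 2 ≤ n → P {ω | N ω = n} = ENNReal.ofReal (2 / (n * (n + 1))) := by
  obtain rfl : S = fun ω => crossingTimes fun i => X i ω := funext hS
  obtain rfl : N = fun ω => sInf (crossingTimes fun i => X i ω) := funext hN
  set E : ℕ → Set Ω := fun n => {ω | ∃ b, IsFirstCrossing (fun i => X i ω) n b}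
  have hleast {n : ℕ} (hn : 2 ≤ n) {ω : Ω} (hω : ω ∈ E n) :
      IsLeast (crossingTimes fun i => X i ω) n :=
    hω.elim fun _ h => isLeast_crossingTimes_of_isFirstCrossing hn h
  have hlaw (n : ℕ) (hn : 2 ≤ n) :
      P {ω | sInf (crossingTimes fun i => X i ω) = n} = P (E n) := by
    refine measure_congr ?_
    filter_upwards [ae_forall_ne_apply_zero hmeas hindep hunif] with ω hω
    exact propext (sInf_crossingTimes_eq_iff hω hn)
  refine ⟨le_antisymm prob_le_one ?_, fun n hn => by
    rw [hlaw n hn, measure_exists_isFirstCrossing hmeas hindep hunif (by omega)]⟩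
  have hdisj : Pairwise (Disjoint on fun k => E (k + 2)) := fun k l hkl =>
    disjoint_left.2 fun ω hk hl =>
      hkl (by simpa using (hleast (by omega) hk).unique (hleast (by omega) hl))
  calc 1 = ∑' k, P (E (k + 2)) := by
        rw [tsum_congr fun k => measure_exists_isFirstCrossing hmeas hindep hunif (n := k + 2)
          (by omega), ← ENNReal.ofReal_tsum_of_nonneg (fun _ => by positivity)
          hasSum_two_div_mul_succ.summable, hasSum_two_div_mul_succ.tsum_eq, ENNReal.ofReal_one]
    _ = P (⋃ k, E (k + 2)) :=
        (measure_iUnion hdisj fun k => measurableSet_exists_isFirstCrossing hmeas (k + 2)).symm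
    _ ≤ P {ω | (crossingTimes fun i => X i ω).Nonempty} :=
        measure_mono <| iUnion_subset fun k ω hω => (hleast (by omega) hω).nonempty
end Crossing
end

section
/- Let ξ, X, η be independent random variables, each exponentially distributed with rate 1. Then the random variable (ξ + X)·e^{−η} is exponentially distributed with rate 1. -/
/-!
The sum `ξ + X` has the `Gamma(2, 1)` law, with distribution function `1 - (1 + s) e^{-s}` on
`s ≥ 0`. Conditioning on `η = z`, the event `(ξ + X) e^{-η} ≤ t` becomes `ξ + X ≤ t e^z`, so
for `t ≥ 0`
`P((ξ + X) e^{-η} ≤ t) = ∫₀^∞ e^{-z} (1 - (1 + t e^z) e^{-t e^z}) dz`.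
The integrand is the derivative of `-e^{-z} + e^{-z - t e^z}`, which is `e^{-t} - 1` at `0` and
tends to `0` at infinity, so the integral is `1 - e^{-t}`.
-/

open MeasureTheory ProbabilityTheory Real Set Filter Topology

namespace MeasureTheory

namespace Measure

lemma conv_apply_Iic (μ ν : Measure ℝ) [SFinite ν] (s : ℝ) :
    (μ ∗ ν) (Iic s) = ∫⁻ x, ν (Iic (s - x)) ∂μ := by
  have hadd : Measurable fun p : ℝ × ℝ => p.1 + p.2 := by fun_prop
  rw [Measure.conv, map_apply hadd measurableSet_Iic, prod_apply (hadd measurableSet_Iic)]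
  congr 1 with x
  congr 1 with y
  simp [le_sub_iff_add_le']

lemma map_prod_mul_exp_neg_apply_Iic (μ ν : Measure ℝ) [SFinite ν] (t : ℝ) :
    ((μ.prod ν).map fun p => p.2 * exp (-p.1)) (Iic t) = ∫⁻ z, ν (Iic (t * exp z)) ∂μ := by
  have hg : Measurable fun p : ℝ × ℝ => p.2 * exp (-p.1) := by fun_prop
  rw [map_apply hg measurableSet_Iic, prod_apply (hg measurableSet_Iic)]
  congr 1 with z
  congr 1 with s
  simp [exp_neg, mul_inv_le_iff₀ (exp_pos z)]

end Measure

lemma lintegral_Ioi_ofReal_of_hasDerivAt_of_nonneg {G g : ℝ → ℝ} {a l : ℝ}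
    (hderiv : ∀ x ∈ Ici a, HasDerivAt G (g x) x) (hg : ∀ x ∈ Ioi a, 0 ≤ g x)
    (hG : Tendsto G atTop (𝓝 l)) :
    ∫⁻ x in Ioi a, ENNReal.ofReal (g x) = ENNReal.ofReal (l - G a) := by
  rw [← integral_Ioi_of_hasDerivAt_of_nonneg' hderiv hg hG,
    ofReal_integral_eq_lintegral_ofReal (integrableOn_Ioi_deriv_of_nonneg' hderiv hg hG)
      ((ae_restrict_iff' measurableSet_Ioi).2 (ae_of_all _ hg))]

end MeasureTheory

namespace ProbabilityTheory

instance : IsProbabilityMeasure (expMeasure 1) := isProbabilityMeasure_expMeasure one_pos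

lemma expMeasure_Iic {r : ℝ} (hr : 0 < r) (x : ℝ) :
    expMeasure r (Iic x) = ENNReal.ofReal (1 - exp (-(r * x))) := by
  have := isProbabilityMeasure_expMeasure hr
  rw [← ofReal_cdf, cdf_expMeasure_eq hr]
  split_ifs with hx
  · rfl
  · rw [ENNReal.ofReal_zero, ENNReal.ofReal_of_nonpos]
    simp only [sub_nonpos, one_le_exp_iff, Left.nonneg_neg_iff]
    nlinarith

lemma lintegral_expMeasure (r : ℝ) (f : ℝ → ENNReal) :
    ∫⁻ x, f x ∂expMeasure r = ∫⁻ x in Ioi 0, ENNReal.ofReal (r * exp (-(r * x))) * f x := by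
  change ∫⁻ x, f x ∂volume.withDensity (fun x => ENNReal.ofReal (exponentialPDFReal r x)) = _
  rw [lintegral_withDensity_eq_lintegral_mul_non_measurable _
    (measurable_exponentialPDFReal r).ennreal_ofReal (ae_of_all _ fun _ => ENNReal.ofReal_lt_top),
    setLIntegral_congr Ioi_ae_eq_Ici, ← lintegral_indicator measurableSet_Ici]
  congr 1 with x
  by_cases hx : 0 ≤ x <;> simp [exponentialPDFReal, gammaPDFReal, hx]

lemma expMeasure_one_conv_self_Iic {s : ℝ} (hs : 0 ≤ s) :
    (expMeasure 1 ∗ expMeasure 1) (Iic s) = ENNReal.ofReal (1 - (1 + s) * exp (-s)) := by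
  have hdensity (x : ℝ) : ENNReal.ofReal (exp (-x)) * ENNReal.ofReal (1 - exp (-(s - x)))
      = ENNReal.ofReal (exp (-x) - exp (-s)) := by
    rw [← ENNReal.ofReal_mul (exp_pos _).le, mul_sub, mul_one, ← exp_add,
      show -x + -(s - x) = -s by ring]
  rw [Measure.conv_apply_Iic, lintegral_expMeasure]
  simp only [expMeasure_Iic one_pos, one_mul, hdensity]
  rw [← Ioc_union_Ioi_eq_Ioi hs, lintegral_union measurableSet_Ioi (Ioc_disjoint_Ioi le_rfl)]
  have htail : ∫⁻ x in Ioi s, ENNReal.ofReal (exp (-x) - exp (-s)) = 0 := by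
    rw [setLIntegral_congr_fun measurableSet_Ioi fun x (hx : s < x) =>
      ENNReal.ofReal_of_nonpos (sub_nonpos.2 (exp_le_exp.2 (neg_le_neg hx.le))), lintegral_zero]
  have hderiv (x : ℝ) :
      HasDerivAt (fun x => -exp (-x) - x * exp (-s)) (exp (-x) - exp (-s)) x :=
    (((hasDerivAt_neg x).exp.neg).sub ((hasDerivAt_id x).mul_const _)).congr_deriv (by simp)
  have hcont : Continuous fun x => exp (-x) - exp (-s) := by fun_prop
  rw [htail, add_zero, ← ofReal_integral_eq_lintegral_ofReal hcont.integrableOn_Ioc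
      ((ae_restrict_iff' measurableSet_Ioc).2 (ae_of_all _ fun x hx =>
        sub_nonneg.2 (exp_le_exp.2 (neg_le_neg hx.2)))),
    ← intervalIntegral.integral_of_le hs,
    intervalIntegral.integral_eq_sub_of_hasDerivAt (fun x _ => hderiv x)
      (hcont.intervalIntegrable _ _)]
  congr 1
  simp only [neg_zero, exp_zero]
  ring

lemma lintegral_expMeasure_one_conv_self_Iic_mul_exp (t : ℝ) :
    ∫⁻ z, (expMeasure 1 ∗ expMeasure 1) (Iic (t * exp z)) ∂expMeasure 1
      = expMeasure 1 (Iic t) := by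
  rcases lt_or_ge t 0 with ht | ht
  · have hzero : (expMeasure 1 ∗ expMeasure 1) (Iic 0) = 0 := by
      simp [expMeasure_one_conv_self_Iic le_rfl]
    rw [expMeasure_Iic one_pos, ENNReal.ofReal_of_nonpos (by simpa using ht.le)]
    exact (lintegral_congr fun z => measure_mono_null
      (Iic_subset_Iic.2 (mul_neg_of_neg_of_pos ht (exp_pos z)).le) hzero).trans lintegral_zero
  set G : ℝ → ℝ := fun z => -exp (-z) + exp (-z - t * exp z)
  have hderiv (z : ℝ) :
      HasDerivAt G (exp (-z) * (1 - (1 + t * exp z) * exp (-(t * exp z)))) z := by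
    refine ((hasDerivAt_neg z).exp.neg.add
      ((hasDerivAt_neg z).sub ((hasDerivAt_exp z).const_mul t)).exp).congr_deriv ?_
    change -(exp (-z) * -1) + exp (-z - t * exp z) * (-1 - t * exp z) = _
    rw [show -z - t * exp z = -z + -(t * exp z) by ring, exp_add]
    ring
  have hnonneg (z : ℝ) : 0 ≤ exp (-z) * (1 - (1 + t * exp z) * exp (-(t * exp z))) := by
    have h : (1 + t * exp z) * exp (-(t * exp z)) ≤ 1 :=
      calc (1 + t * exp z) * exp (-(t * exp z))
          ≤ exp (t * exp z) * exp (-(t * exp z)) := by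
            gcongr; linarith [add_one_le_exp (t * exp z)]
        _ = 1 := by rw [← exp_add, add_neg_cancel, exp_zero]
    exact mul_nonneg (exp_pos _).le (sub_nonneg.2 h)
  have hlim : Tendsto G atTop (𝓝 0) := by
    have hdom (z : ℝ) : exp (-z - t * exp z) ≤ exp (-z) :=
      exp_le_exp.2 (by nlinarith [exp_pos z])
    simpa using tendsto_exp_neg_atTop_nhds_zero.neg.add (squeeze_zero (fun _ => (exp_pos _).le)
      hdom tendsto_exp_neg_atTop_nhds_zero)
  rw [lintegral_expMeasure]
  simp only [one_mul]
  rw [setLIntegral_congr_fun measurableSet_Ioi fun z _ => by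
      rw [expMeasure_one_conv_self_Iic (by positivity), ← ENNReal.ofReal_mul (exp_pos _).le],
    lintegral_Ioi_ofReal_of_hasDerivAt_of_nonneg (fun z _ => hderiv z) (fun z _ => hnonneg z) hlim,
    expMeasure_Iic one_pos]
  congr 1
  simp only [G, neg_zero, exp_zero, mul_one, one_mul, zero_sub]
  ring

end ProbabilityTheory

/-- Invariance of `Exp(1)` (Proposition 4.3): if `ξ, X, η` are independent `Exp(1)`
random variables, then `(ξ + X)·e^{-η}` is `Exp(1)` distributed. -/
theorem stmt_7 {Ω : Type*} [MeasurableSpace Ω] (P : Measure Ω) [IsProbabilityMeasure P]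
    (ξ X η : Ω → ℝ) (hξ : Measurable ξ) (hX : Measurable X) (hη : Measurable η)
    (hindep : iIndepFun ![ξ, X, η] P)
    (hξd : Measure.map ξ P = expMeasure 1)
    (hXd : Measure.map X P = expMeasure 1)
    (hηd : Measure.map η P = expMeasure 1) :
    Measure.map (fun ω => (ξ ω + X ω) * Real.exp (-η ω)) P = expMeasure 1 := by
  have hmeas : ∀ i, Measurable (![ξ, X, η] i) := by
    intro i
    fin_cases i <;> assumption
  have hsum : P.map (ξ + X) = expMeasure 1 ∗ expMeasure 1 := by
    rw [(hindep.indepFun (i := 0) (j := 1) (by decide)).map_add_eq_map_conv_map hξ hX, hξd, hXd]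
  have hpair : P.map (fun ω => (η ω, (ξ + X) ω))
      = (expMeasure 1).prod (expMeasure 1 ∗ expMeasure 1) := by
    rw [(indepFun_iff_map_prod_eq_prod_map_map hη.aemeasurable (hξ.add hX).aemeasurable).1
      (hindep.indepFun_add_left hmeas 0 1 2 (by decide) (by decide)).symm, hηd, hsum]
  have hlaw : P.map (fun ω => (ξ ω + X ω) * exp (-η ω))
      = ((expMeasure 1).prod (expMeasure 1 ∗ expMeasure 1)).map fun p => p.2 * exp (-p.1) := by
    rw [← hpair, Measure.map_map (by fun_prop) (hη.prodMk (hξ.add hX))]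
    rfl
  refine Measure.ext_of_Iic _ _ fun t => ?_
  rw [hlaw, Measure.map_prod_mul_exp_neg_apply_Iic, lintegral_expMeasure_one_conv_self_Iic_mul_exp]
end

section
/- Let ξ, X, η be independent random variables, each exponentially distributed with rate 1. Then for every integer k ≥ 0, the k-th moment E[((ξ + X)·e^{−η})^k] equals k! (which is the k-th moment of the Exp(1) distribution). -/
/-!
By independence the moment factorises as `E[(ξ + X)^k] · E[e^{-kη}]`. Expanding binomially and
using independence once more, `E[(ξ + X)^k] = ∑ C(k,i) i! (k-i)! = (k + 1)!`, while the Laplace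
transform of `Exp(1)` gives `E[e^{-kη}] = 1 / (k + 1)`; the product is `k!`.
-/

open MeasureTheory ProbabilityTheory Set Real Finset Nat

namespace ProbabilityTheory

lemma integral_pow_mul_exp_neg_mul_Ioi (n : ℕ) {b : ℝ} (hb : 0 < b) :
    ∫ x in Ioi 0, x ^ n * exp (-(b * x)) = n ! / b ^ (n + 1) := by
  have h := integral_rpow_mul_exp_neg_mul_Ioi (a := n + 1) (by positivity) hb
  rw [add_sub_cancel_right, Gamma_nat_eq_factorial, ← Nat.cast_succ, rpow_natCast] at h
  simp_rw [rpow_natCast] at h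
  rw [h, one_div_pow, one_div_mul_eq_div]

lemma integral_expMeasure {E : Type*} [NormedAddCommGroup E] [NormedSpace ℝ E]
    {r : ℝ} (hr : 0 < r) (f : ℝ → E) :
    ∫ x, f x ∂expMeasure r = ∫ x in Ioi 0, (r * exp (-(r * x))) • f x := by
  rw [expMeasure, gammaMeasure,
    _root_.integral_withDensity_eq_integral_toReal_smul (f := gammaPDF 1 r)
      (measurable_gammaPDFReal 1 r).ennreal_ofReal (ae_of_all _ fun _ ↦ ENNReal.ofReal_lt_top),
    ← integral_Ici_eq_integral_Ioi, ← setIntegral_eq_integral_of_forall_compl_eq_zero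
      fun x hx ↦ by simp [gammaPDF, gammaPDFReal, show ¬ 0 ≤ x from hx]]
  refine setIntegral_congr_fun measurableSet_Ici fun x (hx : 0 ≤ x) ↦ ?_
  simp [gammaPDF, gammaPDFReal, hx, hr.le, (exp_pos _).le]

lemma integral_pow_expMeasure {r : ℝ} (hr : 0 < r) (n : ℕ) :
    ∫ x, x ^ n ∂expMeasure r = n ! / r ^ n := by
  have hdensity (x : ℝ) : (r * exp (-(r * x))) • x ^ n = r * (x ^ n * exp (-(r * x))) := by
    rw [smul_eq_mul]
    ring
  simp_rw [integral_expMeasure hr, hdensity, integral_const_mul,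
    integral_pow_mul_exp_neg_mul_Ioi n hr]
  field_simp
  ring

lemma integral_exp_neg_mul_expMeasure {r s : ℝ} (hr : 0 < r) (hrs : 0 < r + s) :
    ∫ x, exp (-(s * x)) ∂expMeasure r = r / (r + s) := by
  have hdensity (x : ℝ) :
      (r * exp (-(r * x))) • exp (-(s * x)) = r * (x ^ 0 * exp (-((r + s) * x))) := by
    rw [smul_eq_mul, pow_zero, one_mul, mul_assoc, ← exp_add]
    ring_nf
  simp_rw [integral_expMeasure hr, hdensity, integral_const_mul,
    integral_pow_mul_exp_neg_mul_Ioi 0 hrs]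
  simp [div_eq_mul_inv]

section Independence

variable {Ω : Type*} [MeasurableSpace Ω] {P : Measure Ω}

lemma HasLaw.of_map_eq {𝓧 : Type*} [MeasurableSpace 𝓧] {Z : Ω → 𝓧} {μ : Measure 𝓧} [NeZero μ]
    (h : P.map Z = μ) : HasLaw Z μ P :=
  ⟨.of_map_ne_zero (h ▸ NeZero.ne μ), h⟩

lemma iIndepFun.indepFun_prodMk_of_fin_three {β : Type*} [MeasurableSpace β] {X Y Z : Ω → β}
    (h : iIndepFun ![X, Y, Z] P) (hX : AEMeasurable X P) (hY : AEMeasurable Y P)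
    (hZ : AEMeasurable Z P) :
    IndepFun (fun ω ↦ (X ω, Y ω)) Z P := by
  have hmeas (i : Fin 3) : AEMeasurable (![X, Y, Z] i) P := by
    fin_cases i
    exacts [hX, hY, hZ]
  simpa using h.indepFun_prodMk₀ hmeas 0 1 2 (by decide) (by decide)

variable {X Y : Ω → ℝ} {r : ℝ}

lemma IndepFun.integral_add_pow (hXY : IndepFun X Y P)
    (hX : ∀ n, Integrable (fun ω ↦ X ω ^ n) P) (hY : ∀ n, Integrable (fun ω ↦ Y ω ^ n) P)
    (k : ℕ) :
    ∫ ω, (X ω + Y ω) ^ k ∂P =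
      ∑ i ∈ range (k + 1), (∫ ω, X ω ^ i ∂P) * (∫ ω, Y ω ^ (k - i) ∂P) * k.choose i := by
  have hpow (i j : ℕ) : IndepFun (fun ω ↦ X ω ^ i) (fun ω ↦ Y ω ^ j) P :=
    hXY.comp (measurable_id.pow_const i) (measurable_id.pow_const j)
  simp_rw [add_pow]
  rw [integral_finsetSum _ fun i _ ↦ ?_]
  · refine sum_congr rfl fun i _ ↦ ?_
    rw [integral_mul_const, (hpow i (k - i)).integral_fun_mul_eq_mul_integral
      (hX i).aestronglyMeasurable (hY (k - i)).aestronglyMeasurable]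
  · exact ((hpow i (k - i)).integrable_mul (hX i) (hY (k - i))).mul_const _

lemma HasLaw.integral_pow_expMeasure (hX : HasLaw X (expMeasure r) P) (hr : 0 < r) (n : ℕ) :
    ∫ ω, X ω ^ n ∂P = n ! / r ^ n := by
  rw [← ProbabilityTheory.integral_pow_expMeasure hr n]
  exact hX.integral_comp (measurable_id.pow_const n).aestronglyMeasurable

lemma HasLaw.integrable_pow_expMeasure (hX : HasLaw X (expMeasure r) P) (hr : 0 < r) (n : ℕ) :
    Integrable (fun ω ↦ X ω ^ n) P :=
  .of_integral_ne_zero <| by rw [hX.integral_pow_expMeasure hr]; positivity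

lemma HasLaw.integral_exp_neg_mul_expMeasure (hX : HasLaw X (expMeasure r) P) (hr : 0 < r)
    {s : ℝ} (hrs : 0 < r + s) :
    ∫ ω, exp (-(s * X ω)) ∂P = r / (r + s) := by
  rw [← ProbabilityTheory.integral_exp_neg_mul_expMeasure hr hrs]
  exact hX.integral_comp (f := fun x ↦ exp (-(s * x))) (by fun_prop)

lemma IndepFun.integral_add_pow_of_hasLaw_expMeasure (hXY : IndepFun X Y P)
    (hX : HasLaw X (expMeasure r) P) (hY : HasLaw Y (expMeasure r) P) (hr : 0 < r) (k : ℕ) :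
    ∫ ω, (X ω + Y ω) ^ k ∂P = (k + 1)! / r ^ k := by
  have hterm : ∀ i ∈ range (k + 1),
      (∫ ω, X ω ^ i ∂P) * (∫ ω, Y ω ^ (k - i) ∂P) * k.choose i = k ! / r ^ k := by
    intro i hi
    have hik := mem_range_succ_iff.mp hi
    rw [hX.integral_pow_expMeasure hr, hY.integral_pow_expMeasure hr,
      ← choose_mul_factorial_mul_factorial hik, ← pow_mul_pow_sub r hik]
    push_cast
    field_simp
  rw [hXY.integral_add_pow (hX.integrable_pow_expMeasure hr) (hY.integrable_pow_expMeasure hr),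
    sum_congr rfl hterm, sum_const, card_range, nsmul_eq_mul, factorial_succ]
  push_cast
  ring

end Independence

end ProbabilityTheory

theorem stmt_8_general {Ω : Type*} [MeasurableSpace Ω] (P : Measure Ω) [IsProbabilityMeasure P]
    (ξ X η : Ω → ℝ)
    (hindep : iIndepFun ![ξ, X, η] P)
    (hξd : Measure.map ξ P = expMeasure 1)
    (hXd : Measure.map X P = expMeasure 1)
    (hηd : Measure.map η P = expMeasure 1) :
    ∀ k : ℕ, ∫ ω, ((ξ ω + X ω) * Real.exp (-η ω)) ^ k ∂P = (Nat.factorial k : ℝ) := by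
  intro k
  have := isProbabilityMeasure_expMeasure one_pos
  have hξ := HasLaw.of_map_eq hξd
  have hX := HasLaw.of_map_eq hXd
  have hη := HasLaw.of_map_eq hηd
  have hξX : IndepFun ξ X P := by simpa using hindep.indepFun (i := 0) (j := 1) (by decide)
  have hindep_factors : IndepFun (fun ω ↦ (ξ ω + X ω) ^ k) (fun ω ↦ exp (-η ω) ^ k) P :=
    (hindep.indepFun_prodMk_of_fin_three hξ.aemeasurable hX.aemeasurable hη.aemeasurable).comp
      ((measurable_fst.add measurable_snd).pow_const k) (measurable_neg.exp.pow_const k)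
  have hlaplace : ∫ ω, exp (-η ω) ^ k ∂P = 1 / (1 + k) := by
    simp_rw [← exp_nat_mul, mul_neg]
    exact hη.integral_exp_neg_mul_expMeasure one_pos (by positivity)
  calc ∫ ω, ((ξ ω + X ω) * exp (-η ω)) ^ k ∂P
      = ∫ ω, (ξ ω + X ω) ^ k * exp (-η ω) ^ k ∂P := by simp_rw [mul_pow]
    _ = (∫ ω, (ξ ω + X ω) ^ k ∂P) * ∫ ω, exp (-η ω) ^ k ∂P :=
      hindep_factors.integral_fun_mul_eq_mul_integral
        ((hξ.aemeasurable.add hX.aemeasurable).pow_const k).aestronglyMeasurable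
        (hη.aemeasurable.neg.exp.pow_const k).aestronglyMeasurable
    _ = (k + 1)! / 1 ^ k * (1 / (1 + k)) := by
      rw [hξX.integral_add_pow_of_hasLaw_expMeasure hξ hX one_pos, hlaplace]
    _ = k ! := by
      push_cast [factorial_succ]
      field_simp
      ring

/-- Moment computation (method of moments step in Proposition 4.3): if `ξ, X, η` are
independent `Exp(1)` random variables, then for every `k ≥ 0`,
`E[((ξ + X)·e^{-η})^k] = k!`. -/
theorem stmt_8 {Ω : Type*} [MeasurableSpace Ω] (P : Measure Ω) [IsProbabilityMeasure P]
    (ξ X η : Ω → ℝ) (hξ : Measurable ξ) (hX : Measurable X) (hη : Measurable η)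
    (hindep : iIndepFun ![ξ, X, η] P)
    (hξd : Measure.map ξ P = expMeasure 1)
    (hXd : Measure.map X P = expMeasure 1)
    (hηd : Measure.map η P = expMeasure 1) :
    ∀ k : ℕ, ∫ ω, ((ξ ω + X ω) * Real.exp (-η ω)) ^ k ∂P = (Nat.factorial k : ℝ) :=
  stmt_8_general P ξ X η hindep hξd hXd hηd
end

section
/- Let X and η be independent random variables, each exponentially distributed with rate 1, and define the Markov kernel P on [0,∞) by Pf(x) = E[f((x + X)e^{−η})]. Then for every R > 0, every measurable function f : [0,∞) → ℝ with sup_{z ≥ 0} |f(z)| ≤ 1, and all 0 ≤ x ≤ y ≤ R, one has |Pf(x) − Pf(y)| ≤ 2(1 − e^{−R}). -/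
/-!
Write `H u = E f(u e^{-η})`, which is bounded by `1` for `u ≥ 0`. Independence and Fubini give
`Pf(z) = ∫_0^∞ e^{-s} H(z + s) ds`. With `d = y - x`, the part of this integral for `Pf(x)` over
`s > d` equals `e^{-d} Pf(y)` (memorylessness of `X`), so
`Pf(x) - Pf(y) = ∫_0^d e^{-s} H(x + s) ds - (1 - e^{-d}) Pf(y)`, and both terms are at most
`1 - e^{-d} ≤ 1 - e^{-R}` in absolute value.
-/

open MeasureTheory ProbabilityTheory Real Set

lemma integral_expMeasure_one {E : Type*} [NormedAddCommGroup E] [NormedSpace ℝ E] (g : ℝ → E) :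
    ∫ s, g s ∂expMeasure 1 = ∫ s in Ioi 0, exp (-s) • g s := by
  rw [expMeasure, gammaMeasure, integral_withDensity_eq_integral_toReal_smul (f := gammaPDF 1 1)
    (measurable_gammaPDFReal 1 1).ennreal_ofReal (.of_forall fun _ => ENNReal.ofReal_lt_top),
    ← integral_Ici_eq_integral_Ioi, ← integral_indicator measurableSet_Ici]
  congr with s
  by_cases hs : 0 ≤ s <;> simp [gammaPDF, gammaPDFReal, hs, (exp_pos _).le]

lemma ae_nonneg_expMeasure_one : ∀ᵐ s ∂expMeasure 1, 0 ≤ s := by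
  simp only [ae_iff, not_le]
  exact (withDensity_apply _ measurableSet_Iio).trans (lintegral_gammaPDF_of_nonpos le_rfl)

lemma ProbabilityTheory.IndepFun.integral_comp_eq_integral_integral {Ω α β E : Type*}
    [MeasurableSpace Ω] [MeasurableSpace α] [MeasurableSpace β]
    [NormedAddCommGroup E] [NormedSpace ℝ E] {P : Measure Ω} [IsFiniteMeasure P]
    {X : Ω → α} {Y : Ω → β} (hXY : IndepFun X Y P) (hX : AEMeasurable X P)
    (hY : AEMeasurable Y P) {F : α × β → E} (hF : Integrable F ((P.map X).prod (P.map Y))) :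
    ∫ ω, F (X ω, Y ω) ∂P = ∫ a, ∫ b, F (a, b) ∂P.map Y ∂P.map X := by
  rw [← integral_prod F hF, ← (indepFun_iff_map_prod_eq_prod_map_map hX hY).1 hXY] at *
  exact (integral_map (hX.prodMk hY) hF.aestronglyMeasurable).symm

lemma setIntegral_Ioi_exp_neg_mul (g : ℝ → ℝ) (d : ℝ) :
    ∫ s in Ioi d, exp (-s) * g s = exp (-d) * ∫ s in Ioi 0, exp (-s) * g (s + d) := by
  have := (measurePreserving_add_right volume d).setIntegral_preimage_emb
    (measurableEmbedding_addRight d) (fun s => exp (-s) * g s) (Ioi d)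
  rw [preimage_add_const_Ioi, sub_self] at this
  rw [← this, ← integral_const_mul]
  congr with s
  rw [neg_add, exp_add]
  ring

lemma abs_exp_neg_mul_le {a : ℝ} (s : ℝ) (ha : |a| ≤ 1) : |exp (-s) * a| ≤ exp (-s) := by
  rw [abs_mul, abs_exp]
  exact mul_le_of_le_one_right (exp_pos _).le ha

lemma abs_integral_exp_neg_mul_sub_shift_le {h : ℝ → ℝ} (hm : Measurable h)
    (hb : ∀ s, 0 < s → |h s| ≤ 1) {d : ℝ} (hd : 0 ≤ d) :
    |(∫ s in Ioi 0, exp (-s) * h s) - ∫ s in Ioi 0, exp (-s) * h (s + d)|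
      ≤ 2 * (1 - exp (-d)) := by
  have hint : IntegrableOn (fun s => exp (-s) * h s) (Ioi 0) := by
    refine (integrableOn_exp_neg_Ioi 0).mono' (by fun_prop) ?_
    filter_upwards [ae_restrict_mem measurableSet_Ioi] with s hs
    exact abs_exp_neg_mul_le s (hb s hs)
  have hsplit : ∫ s in Ioi 0, exp (-s) * h s
      = (∫ s in 0..d, exp (-s) * h s) + exp (-d) * ∫ s in Ioi 0, exp (-s) * h (s + d) := by
    rw [← setIntegral_Ioi_exp_neg_mul, intervalIntegral.integral_interval_add_Ioi hint
      (hint.mono_set (Ioi_subset_Ioi hd))]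
  have hmass : ∫ s in 0..d, exp (-s) = 1 - exp (-d) := by
    rw [← intervalIntegral.integral_Ioi_sub_Ioi (integrableOn_exp_neg_Ioi 0) hd,
      integral_exp_neg_Ioi, integral_exp_neg_Ioi, neg_zero, exp_zero]
  have hnear : |∫ s in 0..d, exp (-s) * h s| ≤ 1 - exp (-d) := by
    rw [← Real.norm_eq_abs, ← hmass]
    refine intervalIntegral.norm_integral_le_of_norm_le hd
      (.of_forall fun s hs => abs_exp_neg_mul_le s (hb s hs.1)) ?_
    exact (by fun_prop : Continuous fun s : ℝ => exp (-s)).intervalIntegrable 0 d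
  have hfar : |∫ s in Ioi 0, exp (-s) * h (s + d)| ≤ 1 := by
    rw [← Real.norm_eq_abs, ← integral_exp_neg_Ioi_zero]
    refine norm_integral_le_of_norm_le (integrableOn_exp_neg_Ioi 0) ?_
    filter_upwards [ae_restrict_mem measurableSet_Ioi] with s hs
    exact abs_exp_neg_mul_le s (hb _ (add_pos_of_pos_of_nonneg hs hd))
  have he : exp (-d) ≤ 1 := exp_le_one_iff.2 (neg_nonpos.2 hd)
  calc _ = |(∫ s in 0..d, exp (-s) * h s)
          - (1 - exp (-d)) * ∫ s in Ioi 0, exp (-s) * h (s + d)| := by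
        rw [hsplit]; congr 1; ring
    _ ≤ (1 - exp (-d)) + (1 - exp (-d)) * 1 := by
      refine (abs_sub _ _).trans (add_le_add hnear ?_)
      rw [abs_mul, abs_of_nonneg (sub_nonneg.2 he)]
      exact mul_le_mul_of_nonneg_left hfar (sub_nonneg.2 he)
    _ = 2 * (1 - exp (-d)) := by ring

lemma integral_comp_add_mul_exp_neg_eq {Ω : Type*} [MeasurableSpace Ω] {P : Measure Ω}
    [IsFiniteMeasure P] {X η : Ω → ℝ} (hX : Measurable X) (hη : Measurable η)
    (hindep : IndepFun X η P) (hXd : P.map X = expMeasure 1) (hηd : P.map η = expMeasure 1)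
    {f : ℝ → ℝ} (hf : Measurable f) (hfb : ∀ z, 0 ≤ z → |f z| ≤ 1) {z : ℝ} (hz : 0 ≤ z) :
    ∫ ω, f ((z + X ω) * exp (-η ω)) ∂P
      = ∫ s in Ioi 0, exp (-s) * ∫ t, f ((z + s) * exp (-t)) ∂expMeasure 1 := by
  have : IsProbabilityMeasure (expMeasure 1) := isProbabilityMeasure_expMeasure one_pos
  have hF : Integrable (fun p : ℝ × ℝ => f ((z + p.1) * exp (-p.2)))
      ((expMeasure 1).prod (expMeasure 1)) := by
    refine .of_bound (hf.comp (by fun_prop)).aestronglyMeasurable 1 ?_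
    filter_upwards [Measure.quasiMeasurePreserving_fst.ae ae_nonneg_expMeasure_one] with p hp
    exact hfb _ (mul_nonneg (add_nonneg hz hp) (exp_pos _).le)
  rw [hindep.integral_comp_eq_integral_integral (F := fun p => f ((z + p.1) * exp (-p.2)))
    hX.aemeasurable hη.aemeasurable (hXd ▸ hηd ▸ hF), hXd, hηd, integral_expMeasure_one]
  simp only [smul_eq_mul]

theorem stmt_10_general {Ω : Type*} [MeasurableSpace Ω] (P : Measure Ω) [IsProbabilityMeasure P]
    (X η : Ω → ℝ) (hX : Measurable X) (hη : Measurable η)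
    (hindep : IndepFun X η P)
    (hXd : Measure.map X P = expMeasure 1)
    (hηd : Measure.map η P = expMeasure 1)
    (R : ℝ)
    (f : ℝ → ℝ) (hf : Measurable f) (hfb : ∀ z : ℝ, 0 ≤ z → |f z| ≤ 1)
    (x y : ℝ) (hx : 0 ≤ x) (hxy : x ≤ y) (hyR : y ≤ R) :
    |(∫ ω, f ((x + X ω) * Real.exp (-η ω)) ∂P) -
        (∫ ω, f ((y + X ω) * Real.exp (-η ω)) ∂P)|
      ≤ 2 * (1 - Real.exp (-R)) := by
  have : IsProbabilityMeasure (expMeasure 1) := isProbabilityMeasure_expMeasure one_pos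
  set H : ℝ → ℝ := fun u => ∫ t, f (u * exp (-t)) ∂expMeasure 1
  have hHm : Measurable H :=
    (StronglyMeasurable.integral_prod_right' (f := fun p : ℝ × ℝ => f (p.1 * exp (-p.2)))
      (hf.comp (by fun_prop)).stronglyMeasurable).measurable
  have hHb : ∀ u, 0 ≤ u → |H u| ≤ 1 := fun u hu => by
    simpa using norm_integral_le_of_norm_le_const (μ := expMeasure 1)
      (f := fun t => f (u * exp (-t)))
      (.of_forall fun t => hfb _ (mul_nonneg hu (exp_pos (-t)).le))
  have hshift := abs_integral_exp_neg_mul_sub_shift_le (h := fun s => H (x + s))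
    (by fun_prop) (fun s hs => hHb _ (by linarith)) (sub_nonneg.2 hxy)
  simp only [show ∀ s, x + (s + (y - x)) = y + s from fun s => by ring] at hshift
  rw [integral_comp_add_mul_exp_neg_eq hX hη hindep hXd hηd hf hfb hx,
    integral_comp_add_mul_exp_neg_eq hX hη hindep hXd hηd hf hfb (hx.trans hxy)]
  calc _ ≤ 2 * (1 - exp (-(y - x))) := hshift
    _ ≤ 2 * (1 - exp (-R)) := by gcongr; linarith

/-- The local contraction condition from Proposition 4.3: with `X, η` independent
`Exp(1)` and `Pf(x) = E[f((x + X)e^{-η})]`, for every `R > 0`, every measurable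
`f : [0,∞) → ℝ` with `sup_{z ≥ 0} |f z| ≤ 1`, and all `0 ≤ x ≤ y ≤ R`,
`|Pf(x) - Pf(y)| ≤ 2(1 - e^{-R})`. -/
theorem stmt_10 {Ω : Type*} [MeasurableSpace Ω] (P : Measure Ω) [IsProbabilityMeasure P]
    (X η : Ω → ℝ) (hX : Measurable X) (hη : Measurable η)
    (hindep : IndepFun X η P)
    (hXd : Measure.map X P = expMeasure 1)
    (hηd : Measure.map η P = expMeasure 1)
    (R : ℝ) (hR : 0 < R)
    (f : ℝ → ℝ) (hf : Measurable f) (hfb : ∀ z : ℝ, 0 ≤ z → |f z| ≤ 1)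
    (x y : ℝ) (hx : 0 ≤ x) (hxy : x ≤ y) (hyR : y ≤ R) :
    |(∫ ω, f ((x + X ω) * Real.exp (-η ω)) ∂P) -
        (∫ ω, f ((y + X ω) * Real.exp (-η ω)) ∂P)|
      ≤ 2 * (1 - Real.exp (-R)) :=
  stmt_10_general P X η hX hη hindep hXd hηd R f hf hfb x y hx hxy hyR
end

section
/- For each integer n ≥ 1, let W_n be a random variable taking values in {0, 1, …, n} with P(W_n = k) = c_n · k · C(2n, n−k), where C(·,·) is the binomial coefficient and c_n = 2/(n·C(2n, n)) is the normalizing constant. Then for every t > 0, sup_{s ∈ [0,t]} | √n · P(W_n = ⌊s√n⌋) − 2s·e^{−s²} | → 0 as n → ∞. -/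
section LLTaux


lemma sum_range_odd (k : ℕ) : ∑ j ∈ Finset.range k, (2*(j:ℝ)+1) = (k:ℝ)^2 := by
  induction k with
  | zero => simp
  | succ k ih => rw [Finset.sum_range_succ, ih]; push_cast; ring

lemma choose_prod (n k : ℕ) : k ≤ n →
    (Nat.choose (2*n) (n-k) : ℝ) * ∏ j ∈ Finset.range k, ((n:ℝ)+1+j)
      = (Nat.choose (2*n) n : ℝ) * ∏ j ∈ Finset.range k, ((n:ℝ)-j) := by
  induction k with
  | zero => simp
  | succ k ih =>
    intro hk
    have hk' : k ≤ n := by omega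
    have hnat : Nat.choose (2*n) (n-k) * (n-k) = Nat.choose (2*n) (n-(k+1)) * (n+k+1) := by
      have h1 : n - (k+1) + 1 = n - k := by omega
      have h2 := Nat.choose_succ_right_eq (2*n) (n-(k+1))
      rw [h1] at h2
      rw [h2]
      have : 2*n - (n-(k+1)) = n+k+1 := by omega
      rw [this]
    have hcast : (Nat.choose (2*n) (n-k) : ℝ) * ((n:ℝ)-k) = (Nat.choose (2*n) (n-(k+1)) : ℝ) * ((n:ℝ)+k+1) := by
      have := congrArg (Nat.cast (R := ℝ)) hnat
      push_cast [Nat.cast_sub hk'] at this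
      linarith [this]
    have hih := ih hk'
    rw [Finset.prod_range_succ, Finset.prod_range_succ]
    set A := (Nat.choose (2*n) (n-k) : ℝ)
    set A' := (Nat.choose (2*n) (n-(k+1)) : ℝ)
    set C := (Nat.choose (2*n) n : ℝ)
    set Pn := ∏ j ∈ Finset.range k, ((n:ℝ)+1+j)
    set Pd := ∏ j ∈ Finset.range k, ((n:ℝ)-j)
    calc A' * (Pn * ((n:ℝ)+1+k)) = (A' * ((n:ℝ)+k+1)) * Pn := by ring
      _ = (A * ((n:ℝ)-k)) * Pn := by rw [hcast]
      _ = (A * Pn) * ((n:ℝ)-k) := by ring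
      _ = (C * Pd) * ((n:ℝ)-k) := by rw [hih]
      _ = C * (Pd * ((n:ℝ)-k)) := by ring



lemma choose_ratio (n k : ℕ) (hk : k ≤ n) :
    (Nat.choose (2*n) (n-k) : ℝ)
      = (Nat.choose (2*n) n : ℝ) * ∏ j ∈ Finset.range k, (((n:ℝ)-j)/((n:ℝ)+1+j)) := by
  have hpos : ∀ j ∈ Finset.range k, ((n:ℝ)+1+j) ≠ 0 := by
    intro j hj; positivity
  rw [Finset.prod_div_distrib]
  have hPn : (∏ j ∈ Finset.range k, ((n:ℝ)+1+j)) ≠ 0 := Finset.prod_ne_zero_iff.2 hpos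
  field_simp
  have := choose_prod n k hk
  linarith [this]

lemma prod_upper (n k : ℕ) (hn : 0 < n) (hk : k ≤ n) :
    ∏ j ∈ Finset.range k, (((n:ℝ)-j)/((n:ℝ)+1+j)) ≤ Real.exp (-(k:ℝ)^2/((n:ℝ)+k)) := by
  have hnk : (0:ℝ) < (n:ℝ)+k := by positivity
  calc ∏ j ∈ Finset.range k, (((n:ℝ)-j)/((n:ℝ)+1+j))
      ≤ ∏ j ∈ Finset.range k, Real.exp (-(2*(j:ℝ)+1)/((n:ℝ)+k)) := by
        apply Finset.prod_le_prod
        · intro j hj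
          have hj' : j < k := Finset.mem_range.1 hj
          have : (j:ℝ) ≤ (n:ℝ) := by exact_mod_cast le_of_lt (lt_of_lt_of_le hj' hk)
          have hb : (0:ℝ) < (n:ℝ)+1+j := by positivity
          apply div_nonneg (by linarith) (le_of_lt hb)
        · intro j hj
          have hj' : j < k := Finset.mem_range.1 hj
          have hjk : (j:ℝ)+1 ≤ (k:ℝ) := by exact_mod_cast hj'
          have hb : (0:ℝ) < (n:ℝ)+1+j := by positivity
          have h1 : ((n:ℝ)-j)/((n:ℝ)+1+j) = 1 - (2*(j:ℝ)+1)/((n:ℝ)+1+j) := by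
            field_simp; ring
          have h2 : 1 - (2*(j:ℝ)+1)/((n:ℝ)+1+j) ≤ Real.exp (-((2*(j:ℝ)+1)/((n:ℝ)+1+j))) := by
            have := Real.add_one_le_exp (-((2*(j:ℝ)+1)/((n:ℝ)+1+j))); linarith
          have h3 : Real.exp (-((2*(j:ℝ)+1)/((n:ℝ)+1+j))) ≤ Real.exp (-(2*(j:ℝ)+1)/((n:ℝ)+k)) := by
            rw [Real.exp_le_exp]
            have hx : (0:ℝ) ≤ 2*(j:ℝ)+1 := by positivity
            have hd : ((n:ℝ)+1+j) ≤ (n:ℝ)+k := by linarith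
            rw [neg_div]
            apply neg_le_neg
            gcongr
          rw [h1]; exact le_trans h2 h3
    _ = Real.exp (∑ j ∈ Finset.range k, -(2*(j:ℝ)+1)/((n:ℝ)+k)) := (Real.exp_sum _ _).symm
    _ = Real.exp (-(k:ℝ)^2/((n:ℝ)+k)) := by
        rw [← Finset.sum_div]
        congr 1
        rw [Finset.sum_neg_distrib, sum_range_odd]

lemma prod_lower (n k : ℕ) (hn : 0 < n) (hk : k ≤ n) :
    Real.exp (-(k:ℝ)^2/((n:ℝ)+1-k)) ≤ ∏ j ∈ Finset.range k, (((n:ℝ)-j)/((n:ℝ)+1+j)) := by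
  have hden : (0:ℝ) < (n:ℝ)+1-k := by
    have : (k:ℝ) ≤ (n:ℝ) := by exact_mod_cast hk
    linarith
  calc Real.exp (-(k:ℝ)^2/((n:ℝ)+1-k))
      = ∏ j ∈ Finset.range k, Real.exp (-(2*(j:ℝ)+1)/((n:ℝ)+1-k)) := by
        rw [← Real.exp_sum, ← Finset.sum_div, Finset.sum_neg_distrib, sum_range_odd]
    _ ≤ ∏ j ∈ Finset.range k, (((n:ℝ)-j)/((n:ℝ)+1+j)) := by
        apply Finset.prod_le_prod
        · intro j hj; positivity
        · intro j hj
          have hj' : j < k := Finset.mem_range.1 hj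
          have hjk : (j:ℝ)+1 ≤ (k:ℝ) := by exact_mod_cast hj'
          have hkn : (k:ℝ) ≤ (n:ℝ) := by exact_mod_cast hk
          have ha : (0:ℝ) < (n:ℝ)-j := by linarith
          have hb : (0:ℝ) < (n:ℝ)+1+j := by positivity
          have hmono : (2*(j:ℝ)+1)/((n:ℝ)-j) ≤ (2*(j:ℝ)+1)/((n:ℝ)+1-k) := by
            apply div_le_div_of_nonneg_left (by positivity) hden (by linarith)
          have step1 : Real.exp (-(2*(j:ℝ)+1)/((n:ℝ)+1-k))
              ≤ Real.exp (-((2*(j:ℝ)+1)/((n:ℝ)-j))) := by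
            rw [Real.exp_le_exp, neg_div, neg_le_neg_iff]
            exact hmono
          have step2 : Real.exp (-((2*(j:ℝ)+1)/((n:ℝ)-j))) ≤ ((n:ℝ)-j)/((n:ℝ)+1+j) := by
            set x : ℝ := (2*(j:ℝ)+1)/((n:ℝ)-j) with hx
            have hx0 : 0 ≤ x := by positivity
            have h1x : 1 + x ≤ Real.exp x := by
              have := Real.add_one_le_exp x; linarith
            have h1px : 1+x = ((n:ℝ)+1+j)/((n:ℝ)-j) := by
              rw [hx]; field_simp; ring
            have hratio : ((n:ℝ)-j)/((n:ℝ)+1+j) = 1/(1+x) := by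
              rw [h1px, one_div_div]
            rw [hratio, Real.exp_neg, inv_eq_one_div]
            exact one_div_le_one_div_of_le (by positivity) h1x
          exact le_trans step1 step2

lemma exp_neg_lip (a b : ℝ) (ha : 0 ≤ a) (h : a ≤ b) :
    Real.exp (-a) - Real.exp (-b) ≤ b - a := by
  have e1 : Real.exp (-b) = Real.exp (-a) * Real.exp (a - b) := by
    rw [← Real.exp_add]; ring_nf
  have e2 : (a - b) + 1 ≤ Real.exp (a - b) := Real.add_one_le_exp _
  have e3 : Real.exp (-a) ≤ 1 := Real.exp_le_one_iff.2 (by linarith)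
  have e4 : 0 < Real.exp (-a) := Real.exp_pos _
  nlinarith [mul_le_mul_of_nonneg_left e2 e4.le]

end LLTaux




/-- `P(W_n = k) = c_n · k · C(2n, n-k)` with `c_n = 2/(n·C(2n,n))`. -/
noncomputable def pW (n k : ℕ) : ℝ :=
  2 / ((n : ℝ) * (Nat.choose (2 * n) n : ℝ)) * (k : ℝ) * (Nat.choose (2 * n) (n - k) : ℝ)

set_option maxHeartbeats 1000000 in
/-- Local limit theorem (Lemma 4.1, eq. (4.1)): for every `t > 0`,
`sup_{s ∈ [0,t]} |√n · P(W_n = ⌊s√n⌋) - 2s·e^{-s²}| → 0` as `n → ∞`. -/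
theorem stmt_11 :
    ∀ t : ℝ, 0 < t → ∀ ε : ℝ, 0 < ε → ∃ N : ℕ, ∀ n : ℕ, N ≤ n →
      ∀ s ∈ Set.Icc (0 : ℝ) t,
        |Real.sqrt n * pW n ⌊s * Real.sqrt n⌋₊ - 2 * s * Real.exp (-s ^ 2)| < ε := by
  intro t ht ε hε
  set Cst : ℝ := 2 + 8*t^2 + 6*t^4 with hCst
  have hC : 0 < Cst := by positivity
  set M : ℝ := Cst / ε with hM
  have hM0 : 0 < M := by positivity
  refine ⟨max (⌈4*t^2⌉₊ + 1) (⌈M^2⌉₊ + 1), ?_⟩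
  intro n hn s hs
  obtain ⟨hs0, hst⟩ := hs
  have hn0 : 0 < n := by
    have := le_trans (le_max_left _ _) hn; omega
  have hnR : (0:ℝ) < (n:ℝ) := by exact_mod_cast hn0
  have h4t : 4*t^2 ≤ (n:ℝ) := by
    have h1 : ⌈4*t^2⌉₊ + 1 ≤ n := le_trans (le_max_left _ _) hn
    have h2 : (⌈4*t^2⌉₊ : ℝ) ≤ (n:ℝ) := by exact_mod_cast le_trans (Nat.le_succ _) h1
    exact le_trans (Nat.le_ceil _) h2
  have hMn : M^2 < (n:ℝ) := by
    have h1 : ⌈M^2⌉₊ + 1 ≤ n := le_trans (le_max_right _ _) hn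
    have h2 : (⌈M^2⌉₊ : ℝ) + 1 ≤ (n:ℝ) := by exact_mod_cast h1
    have := Nat.le_ceil (M^2)
    linarith
  set r := Real.sqrt (n:ℝ) with hrdef
  have hr0 : 0 < r := Real.sqrt_pos.2 hnR
  have hr2 : r^2 = (n:ℝ) := Real.sq_sqrt hnR.le
  have hrr : r * r = (n:ℝ) := by rw [← hr2]; ring
  have hrM : M < r := (Real.lt_sqrt hM0.le).2 hMn
  have h2t : 2*t ≤ r := by
    apply (Real.le_sqrt (by positivity) hnR.le).2
    calc (2*t)^2 = 4*t^2 := by ring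
      _ ≤ (n:ℝ) := h4t
  set k := ⌊s * r⌋₊ with hkdef
  have hk_le : (k:ℝ) ≤ s * r := Nat.floor_le (by positivity)
  have hk_gt : s * r < (k:ℝ) + 1 := Nat.lt_floor_add_one _
  have hk0 : (0:ℝ) ≤ (k:ℝ) := Nat.cast_nonneg _
  have hkt : (k:ℝ) ≤ t * r := le_trans hk_le (mul_le_mul_of_nonneg_right hst hr0.le)
  have hk_half : (k:ℝ) ≤ (n:ℝ)/2 := by
    have h := mul_le_mul_of_nonneg_right h2t hr0.le
    linarith
  have hkn : k ≤ n := by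
    have : (k:ℝ) ≤ (n:ℝ) := by linarith
    exact_mod_cast this
  have hC0 : (0:ℝ) < (Nat.choose (2*n) n : ℝ) := by
    exact_mod_cast Nat.choose_pos (by omega)
  set P := ∏ j ∈ Finset.range k, (((n:ℝ)-j)/((n:ℝ)+1+j)) with hPdef
  set E := Real.exp (-s^2) with hEdef
  have hval : r * pW n k = 2 * ((k:ℝ)/r) * P := by
    rw [pW, choose_ratio n k hkn, ← hPdef]
    field_simp
    rw [← hr2]
  set u := (k:ℝ)/r with hudef
  have hu_le_s : u ≤ s := by
    rw [hudef, div_le_iff₀ hr0]; linarith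
  have hs_lt : s - u < 1/r := by
    rw [hudef, lt_div_iff₀ hr0]
    have : (s - (k:ℝ)/r) * r = s*r - (k:ℝ) := by field_simp
    rw [this]; linarith
  have hu0 : 0 ≤ u := by positivity
  have hut : u ≤ t := le_trans hu_le_s hst
  have hu2s : u^2 ≤ s^2 := pow_le_pow_left₀ hu0 hu_le_s 2
  have hu2 : u^2 = (k:ℝ)^2/(n:ℝ) := by
    rw [hudef, div_pow, hr2]
  have hPub := prod_upper n k hn0 hkn
  have hPlb := prod_lower n k hn0 hkn
  rw [← hPdef] at hPub hPlb
  set Lo := (k:ℝ)^2/((n:ℝ)+(k:ℝ)) with hLodef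
  set U := (k:ℝ)^2/((n:ℝ)+1-(k:ℝ)) with hUdef
  have hdenU : (0:ℝ) < (n:ℝ)+1-(k:ℝ) := by linarith
  have hdenL : (0:ℝ) < (n:ℝ)+(k:ℝ) := by linarith
  have hLo0 : 0 ≤ Lo := by rw [hLodef]; positivity
  have hU0 : 0 ≤ U := by rw [hUdef]; positivity
  have hP0 : 0 ≤ P := le_trans (Real.exp_pos _).le hPlb
  have hP1 : P ≤ 1 := by
    refine le_trans hPub (Real.exp_le_one_iff.2 ?_)
    rw [neg_div]; simp only [neg_nonpos]; positivity
  have hPLo : P ≤ Real.exp (-Lo) := by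
    rw [hLodef, ← neg_div]; exact hPub
  have hPU : Real.exp (-U) ≤ P := by
    rw [hUdef, ← neg_div]; exact hPlb
  -- arithmetic estimates
  have hLo_u2 : Lo ≤ u^2 := by
    rw [hLodef, hu2]
    apply div_le_div_of_nonneg_left (by positivity) hnR (by linarith)
  have hkr3 : (k:ℝ)^3 * r ≤ t^3 * (n:ℝ)^2 := by
    have hkc : (k:ℝ)^3 ≤ (t*r)^3 := pow_le_pow_left₀ hk0 hkt 3
    have h1 : (k:ℝ)^3 * r ≤ (t*r)^3 * r := mul_le_mul_of_nonneg_right hkc hr0.le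
    have h2 : (t*r)^3 * r = t^3 * (n:ℝ)^2 := by rw [← hr2]; ring
    linarith
  have hu2Lo : u^2 - Lo ≤ t^3/r := by
    have he : u^2 - Lo = (k:ℝ)^3/((n:ℝ)*((n:ℝ)+(k:ℝ))) := by
      rw [hu2, hLodef]; field_simp; ring
    rw [he, div_le_div_iff₀ (by positivity) hr0]
    have h3 : (n:ℝ)*(n:ℝ) ≤ (n:ℝ)*((n:ℝ)+(k:ℝ)) :=
      mul_le_mul_of_nonneg_left (by linarith) hnR.le
    have h6 : t^3 * ((n:ℝ)*(n:ℝ)) ≤ t^3 * ((n:ℝ)*((n:ℝ)+(k:ℝ))) :=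
      mul_le_mul_of_nonneg_left h3 (by positivity)
    have h7 : t^3 * (n:ℝ)^2 = t^3 * ((n:ℝ)*(n:ℝ)) := by ring
    linarith
  have heU : U - u^2 = (k:ℝ)^2*((k:ℝ)-1)/((n:ℝ)*((n:ℝ)+1-(k:ℝ))) := by
    rw [hu2, hUdef]; field_simp; ring
  have hnum : 0 ≤ (k:ℝ)^2*((k:ℝ)-1) := by
    rcases Nat.eq_zero_or_pos k with h | h
    · simp [h]
    · have h1 : (1:ℝ) ≤ (k:ℝ) := by exact_mod_cast h
      exact mul_nonneg (sq_nonneg _) (by linarith)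
  have hu2_U : u^2 ≤ U := by
    have := div_nonneg hnum (by positivity : (0:ℝ) ≤ (n:ℝ)*((n:ℝ)+1-(k:ℝ)))
    linarith
  have hU_u2 : U - u^2 ≤ 2*t^3/r := by
    rw [heU, div_le_div_iff₀ (by positivity) hr0]
    have h4 : (k:ℝ)^2*((k:ℝ)-1)*r ≤ (k:ℝ)^3 * r := by
      have e : (k:ℝ)^3*r - (k:ℝ)^2*((k:ℝ)-1)*r = (k:ℝ)^2*r := by ring
      have : (0:ℝ) ≤ (k:ℝ)^2*r := by positivity
      linarith
    have h5 : (n:ℝ)^2 ≤ 2*((n:ℝ)*((n:ℝ)+1-(k:ℝ))) := by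
      have hp : (0:ℝ) ≤ (n:ℝ)*((n:ℝ)-2*(k:ℝ)) :=
        mul_nonneg hnR.le (by linarith)
      have e : 2*((n:ℝ)*((n:ℝ)+1-(k:ℝ))) - (n:ℝ)^2 = (n:ℝ)*((n:ℝ)-2*(k:ℝ)) + 2*(n:ℝ) := by
        ring
      linarith
    have h6 : t^3 * (n:ℝ)^2 ≤ t^3 * (2*((n:ℝ)*((n:ℝ)+1-(k:ℝ)))) :=
      mul_le_mul_of_nonneg_left h5 (by positivity)
    have h7 : t^3 * (2*((n:ℝ)*((n:ℝ)+1-(k:ℝ)))) = 2*t^3 * ((n:ℝ)*((n:ℝ)+1-(k:ℝ))) := by ring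
    linarith
  have hs2u2 : s^2 - u^2 ≤ 2*t/r := by
    have h1 : s - u ≤ 1/r := hs_lt.le
    have h2 : s + u ≤ 2*t := by linarith
    have h3 := mul_le_mul h1 h2 (by linarith) (by positivity : (0:ℝ) ≤ 1/r)
    have e1 : (s-u)*(s+u) = s^2 - u^2 := by ring
    have e2 : 1/r*(2*t) = 2*t/r := by ring
    linarith
  -- |P - E| bound
  set D := (2*t + 3*t^3)/r with hDdef
  have hDsplit : D = 2*t/r + 3*(t^3/r) := by rw [hDdef]; ring
  have ht3r : (0:ℝ) ≤ t^3/r := by positivity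
  have htr : (0:ℝ) ≤ 2*t/r := by positivity
  have hD0 : 0 ≤ D := by rw [hDdef]; positivity
  have hPE : |P - E| ≤ D := by
    have hi : P - E ≤ D := by
      have l1 : Lo ≤ s^2 := by linarith
      have l2 := exp_neg_lip Lo (s^2) hLo0 l1
      have l3 : P - E ≤ s^2 - Lo := by rw [hEdef]; linarith
      linarith
    have hii : E - P ≤ D := by
      rcases le_total (s^2) U with h | h
      · have l2 := exp_neg_lip (s^2) U (by positivity) h
        have l4 : U - s^2 ≤ 2*t^3/r := by linarith
        have e : 2*t^3/r = 2*(t^3/r) := by ring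
        rw [hEdef]; linarith
      · have l5 : E ≤ Real.exp (-U) := by
          rw [hEdef, Real.exp_le_exp]; linarith
        linarith
    exact abs_le.2 ⟨by linarith, hi⟩
  -- final assembly
  rw [hval]
  have e1 : 2*u*P - 2*s*E = 2*(u-s)*P + 2*s*(P-E) := by ring
  have b1 : |2*(u-s)*P| ≤ 2*(1/r) := by
    rw [abs_mul, abs_mul, abs_of_nonneg hP0, abs_of_nonpos (by linarith : u - s ≤ 0)]
    have h2 : |(2:ℝ)| = 2 := by norm_num
    rw [h2]
    have h3 := mul_le_mul hs_lt.le hP1 hP0 (by positivity : (0:ℝ) ≤ 1/r)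
    have e : 2*(-(u-s))*P = 2*((s-u)*P) := by ring
    have e2 : (1:ℝ)/r*1 = 1/r := by ring
    linarith
  have b2 : |2*s*(P-E)| ≤ 2*t*D := by
    rw [abs_mul, abs_mul, abs_of_nonneg hs0]
    have h2 : |(2:ℝ)| = 2 := by norm_num
    rw [h2]
    have h3 := mul_le_mul hst hPE (abs_nonneg _) ht.le
    linarith
  have btotal : |2*u*P - 2*s*E| ≤ 2*(1/r) + 2*t*D := by
    calc |2*u*P - 2*s*E| = |2*(u-s)*P + 2*s*(P-E)| := by rw [e1]
      _ ≤ |2*(u-s)*P| + |2*s*(P-E)| := abs_add_le _ _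
      _ ≤ 2*(1/r) + 2*t*D := by linarith
  have hfin : 2*(1/r) + 2*t*D < ε := by
    have heq : 2*(1/r) + 2*t*D = (2 + 4*t^2 + 6*t^4)/r := by
      rw [hDdef]; field_simp; ring
    rw [heq]
    have h1 : (2 + 4*t^2 + 6*t^4)/r ≤ Cst/r := by
      gcongr
      rw [hCst]
      linarith [sq_nonneg t]
    have h2 : Cst/r < ε := by
      rw [div_lt_iff₀ hr0]
      have h3 : Cst/ε < r := hrM
      rw [div_lt_iff₀ hε] at h3
      linarith
    linarith
  calc |2*u*P - 2*s*E| ≤ 2*(1/r) + 2*t*D := btotal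
    _ < ε := hfin
end

section
/- For each integer n ≥ 1, let W_n be a random variable taking values in {0, 1, …, n} with P(W_n = k) = c_n · k · C(2n, n−k), where C(·,·) is the binomial coefficient and c_n = 2/(n·C(2n, n)). Then the law of W_n²/n converges weakly, as n → ∞, to the exponential distribution with rate 1. -/
/-!
Telescoping the identity `k·C(2n, n+k) = n·(C(2n-1, n+k-1) - C(2n-1, n+k))` gives the tail
`P(W_n ≥ j) = ∏_{i<j} (n-i)/(n+i)`, which `1 + t ≤ eᵗ` squeezes between `exp(-j(j-1)/(n-j+1))`
and `exp(-j(j-1)/(n+j))`. For `j = ⌊√(n x)⌋ + 1` both bounds tend to `e^{-x}`, so the distribution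
functions of `W_n²/n` converge at every point to that of `Exp(1)`. Convergence on the π-system of
intervals `(a, b]`, which contains arbitrarily small neighbourhoods of every point, is weak
convergence by the portmanteau theorem.
-/

open MeasureTheory ProbabilityTheory Topology Filter

open Set in
theorem MeasureTheory.ProbabilityMeasure.tendsto_of_tendsto_cdf {ι : Type*} {l : Filter ι}
    [l.IsCountablyGenerated] {μ : ι → ProbabilityMeasure ℝ} {ν : ProbabilityMeasure ℝ}
    (h : ∀ x, Tendsto (fun i ↦ cdf (μ i : Measure ℝ) x) l (𝓝 (cdf (ν : Measure ℝ) x))) :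
    Tendsto μ l (𝓝 ν) := by
  have measure_Ioc (ρ : ProbabilityMeasure ℝ) (a b : ℝ) (hab : a ≤ b) :
      (ρ (Ioc a b) : ℝ) = cdf (ρ : Measure ℝ) b - cdf (ρ : Measure ℝ) a := by
    have := (cdf (ρ : Measure ℝ)).measure_Ioc a b
    rw [measure_cdf] at this
    rw [← measureReal_eq_coe_coeFn, measureReal_def, this,
      ENNReal.toReal_ofReal (sub_nonneg.2 (monotone_cdf _ hab))]
  apply (isPiSystem_Ioc (id : ℝ → ℝ) id).tendsto_probabilityMeasure_of_tendsto_of_mem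
  · rintro _ ⟨a, b, -, rfl⟩
    exact measurableSet_Ioc
  · intro u hu x hx
    obtain ⟨ε, hε, hball⟩ := Metric.isOpen_iff.1 hu x hx
    refine ⟨Ioc (x - ε / 2) (x + ε / 2),
      ⟨x - ε / 2, x + ε / 2, show x - ε / 2 < x + ε / 2 by linarith, rfl⟩,
      Ioc_mem_nhds (by linarith) (by linarith), fun y hy ↦ hball ?_⟩
    rw [Metric.mem_ball, Real.dist_eq, abs_lt]
    constructor <;> linarith [hy.1, hy.2]
  · rintro _ ⟨a, b, hab, rfl⟩
    rw [← NNReal.tendsto_coe]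
    simpa only [id, measure_Ioc _ a b hab.le] using (h b).sub (h a)

open Finset

theorem Nat.cast_choose_add_div_choose {N a : ℕ} (ha : a ≤ N) (j : ℕ) :
    (N.choose (a + j) : ℝ) / N.choose a = ∏ i ∈ range j, ((N : ℝ) - a - i) / (a + i + 1) := by
  have hpos : (0 : ℝ) < N.choose a := by exact_mod_cast Nat.choose_pos ha
  induction j with
  | zero => simp [hpos.ne']
  | succ j ih =>
    rw [prod_range_succ, ← ih, ← add_assoc]
    have hrec := Nat.choose_succ_right_eq N (a + j)
    rcases le_or_gt (a + j) N with hle | hlt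
    · rw [← Nat.cast_inj (R := ℝ)] at hrec
      push_cast [hle] at hrec
      field_simp
      linear_combination hrec
    · simp [Nat.choose_eq_zero_of_lt hlt, Nat.choose_eq_zero_of_lt (hlt.trans (a + j).lt_succ_self)]

theorem pW_succ {m j : ℕ} (hj : j ≤ m + 1) :
    pW (m + 1) j = ((2 * m + 1).choose (m + j) - (2 * m + 1).choose (m + j + 1) : ℝ) /
      (2 * m + 1).choose m := by
  have hsymm : (2 * m + 1 + 1).choose (m + 1 - j) = (2 * m + 1 + 1).choose (m + j + 1) :=
    Nat.choose_symm_of_eq_add (by omega)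
  have hcentral := Nat.add_one_mul_choose_eq (2 * m + 1) m
  have habsorb := Nat.add_one_mul_choose_eq (2 * m + 1) (m + j)
  have hpascal := Nat.choose_succ_succ' (2 * m + 1) (m + j)
  rw [← Nat.cast_inj (R := ℝ)] at hcentral habsorb hpascal
  have hC : ((2 * m + 1).choose m : ℝ) ≠ 0 := by exact_mod_cast (Nat.choose_pos (by omega)).ne'
  unfold pW
  rw [show 2 * (m + 1) = 2 * m + 1 + 1 by ring, hsymm]
  push_cast at hcentral habsorb hpascal ⊢
  have hcentral' : ((2 * m + 1 + 1).choose (m + 1) : ℝ) = 2 * (2 * m + 1).choose m :=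
    mul_right_cancel₀ (by positivity : (m : ℝ) + 1 ≠ 0) (by linear_combination -hcentral)
  rw [hcentral']
  field_simp
  linear_combination -habsorb - (m + 1) * hpascal

theorem sum_Ico_pW_succ {m j : ℕ} (hj : j ≤ m + 2) :
    ∑ k ∈ Ico j (m + 2), pW (m + 1) k =
      ((2 * m + 1).choose (m + j) : ℝ) / (2 * m + 1).choose m := by
  set F : ℕ → ℝ := fun k ↦ ((2 * m + 1).choose (m + k) : ℝ) / (2 * m + 1).choose m
  calc ∑ k ∈ Ico j (m + 2), pW (m + 1) k = -∑ k ∈ Ico j (m + 2), (F (k + 1) - F k) := by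
        rw [← sum_neg_distrib]
        refine sum_congr rfl fun k hk ↦ ?_
        rw [pW_succ (Nat.lt_succ_iff.1 (mem_Ico.1 hk).2)]
        simp only [F, ← add_assoc]
        ring
    _ = F j := by
        rw [sum_Ico_sub F hj]
        simp [F, Nat.choose_eq_zero_of_lt (show 2 * m + 1 < m + (m + 2) by omega)]

theorem sum_Ico_pW_eq_prod {n : ℕ} (hn : n ≠ 0) (j : ℕ) :
    ∑ k ∈ Ico j (n + 1), pW n k = ∏ i ∈ range j, ((n : ℝ) - i) / (n + i) := by
  rcases le_or_gt j (n + 1) with hj | hj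
  · obtain ⟨m, rfl⟩ := Nat.exists_eq_succ_of_ne_zero hn
    rw [sum_Ico_pW_succ hj, Nat.cast_choose_add_div_choose (by omega)]
    refine prod_congr rfl fun i _ ↦ ?_
    push_cast
    ring_nf
  · rw [Ico_eq_empty (by omega), sum_empty, eq_comm]
    exact prod_eq_zero (mem_range.2 (by omega : n < j)) (by simp)

theorem sum_range_pW {n : ℕ} (hn : n ≠ 0) : ∑ k ∈ range (n + 1), pW n k = 1 := by
  simpa using sum_Ico_pW_eq_prod hn 0

theorem two_mul_sum_range_natCast (j : ℕ) : 2 * ∑ i ∈ range j, (i : ℝ) = j * (j - 1) := by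
  induction j with
  | zero => simp
  | succ j ih => rw [sum_range_succ, mul_add, ih]; push_cast; ring

theorem exp_neg_mul_sub_one_div_eq_prod (j : ℕ) (d : ℝ) :
    Real.exp (-(j * (j - 1) / d)) = ∏ i ∈ range j, Real.exp (-(2 * i / d)) := by
  rw [← Real.exp_sum, ← two_mul_sum_range_natCast, sum_neg_distrib, mul_sum, sum_div]

theorem prod_sub_div_add_le_exp {y : ℝ} {j : ℕ} (hj : (j : ℝ) ≤ y) :
    ∏ i ∈ range j, (y - i) / (y + i) ≤ Real.exp (-(j * (j - 1) / (y + j))) := by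
  rw [exp_neg_mul_sub_one_div_eq_prod]
  refine prod_le_prod (fun i hi ↦ ?_) fun i hi ↦ ?_
  · have : (i : ℝ) < j := by exact_mod_cast mem_range.1 hi
    apply div_nonneg <;> linarith [(Nat.cast_nonneg i : (0 : ℝ) ≤ i)]
  · have hij : (i : ℝ) < j := by exact_mod_cast mem_range.1 hi
    have hi0 : (0 : ℝ) ≤ i := Nat.cast_nonneg i
    have hyi : 0 < y + i := by linarith
    calc (y - i) / (y + i) = -(2 * i / (y + i)) + 1 := by field_simp; ring
      _ ≤ Real.exp (-(2 * i / (y + i))) := Real.add_one_le_exp _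
      _ ≤ Real.exp (-(2 * i / (y + j))) := by gcongr

theorem exp_le_prod_sub_div_add {y : ℝ} {j : ℕ} (hj : (j : ℝ) ≤ y) :
    Real.exp (-(j * (j - 1) / (y - j + 1))) ≤ ∏ i ∈ range j, (y - i) / (y + i) := by
  rw [exp_neg_mul_sub_one_div_eq_prod]
  refine prod_le_prod (fun i _ ↦ (Real.exp_pos _).le) fun i hi ↦ ?_
  have hij : (i : ℝ) + 1 ≤ j := by exact_mod_cast mem_range.1 hi
  have hi0 : (0 : ℝ) ≤ i := Nat.cast_nonneg i
  have hyi : 0 < y - i := by linarith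
  have hyj : 0 < y - j + 1 := by linarith
  calc Real.exp (-(2 * i / (y - j + 1))) ≤ Real.exp (-(2 * i / (y - i))) := by
        gcongr; linarith
    _ ≤ (2 * i / (y - i) + 1)⁻¹ := by
        rw [Real.exp_neg]
        exact inv_anti₀ (by positivity) (Real.add_one_le_exp _)
    _ = (y - i) / (y + i) := by
        rw [div_add_one hyi.ne', inv_div]
        ring_nf

theorem tendsto_exp_neg_mul_sub_one_div {j : ℕ → ℕ} {d : ℕ → ℝ} {x : ℝ}
    (hj : Tendsto (fun n : ℕ ↦ (j n : ℝ) * (j n - 1) / n) atTop (𝓝 x))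
    (hd : Tendsto (fun n : ℕ ↦ d n / n) atTop (𝓝 1)) :
    Tendsto (fun n ↦ Real.exp (-(j n * (j n - 1) / d n))) atTop (𝓝 (Real.exp (-x))) := by
  have hquot := hj.div hd one_ne_zero
  rw [div_one] at hquot
  refine (Real.continuous_exp.tendsto _).comp (hquot.neg.congr' ?_)
  filter_upwards [eventually_gt_atTop 0] with n hn
  simp only [Pi.div_apply]
  rw [div_div_div_cancel_right₀ (Nat.cast_pos.2 hn : (0 : ℝ) < n).ne']

theorem tendsto_prod_range_sub_div_add {j : ℕ → ℕ} {x : ℝ}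
    (hj : Tendsto (fun n : ℕ ↦ (j n : ℝ) * (j n - 1) / n) atTop (𝓝 x))
    (hj' : Tendsto (fun n : ℕ ↦ (j n : ℝ) / n) atTop (𝓝 0)) :
    Tendsto (fun n : ℕ ↦ ∏ i ∈ range (j n), ((n : ℝ) - i) / (n + i)) atTop
      (𝓝 (Real.exp (-x))) := by
  have hjn : ∀ᶠ n : ℕ in atTop, (j n : ℝ) ≤ n := by
    filter_upwards [hj'.eventually (gt_mem_nhds one_pos), eventually_gt_atTop 0] with n h hn
    exact ((div_lt_one (Nat.cast_pos.2 hn)).1 h).le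
  have hinv := tendsto_one_div_atTop_nhds_zero_nat (𝕜 := ℝ)
  have hlower : Tendsto (fun n : ℕ ↦ ((n : ℝ) - j n + 1) / n) atTop (𝓝 1) := by
    have := ((tendsto_const_nhds (x := (1 : ℝ))).sub hj').add hinv
    rw [sub_zero, add_zero] at this
    refine this.congr' ?_
    filter_upwards [eventually_gt_atTop 0] with n hn
    field_simp
  have hupper : Tendsto (fun n : ℕ ↦ ((n : ℝ) + j n) / n) atTop (𝓝 1) := by
    have := (tendsto_const_nhds (x := (1 : ℝ))).add hj'
    rw [add_zero] at this
    refine this.congr' ?_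
    filter_upwards [eventually_gt_atTop 0] with n hn
    field_simp
  refine tendsto_of_tendsto_of_tendsto_of_le_of_le' (tendsto_exp_neg_mul_sub_one_div hj hlower)
    (tendsto_exp_neg_mul_sub_one_div hj hupper) ?_ ?_
  · filter_upwards [hjn] with n h using exp_le_prod_sub_div_add h
  · filter_upwards [hjn] with n h using prod_sub_div_add_le_exp h

theorem tendsto_sqrt_natCast_mul_div (x : ℝ) :
    Tendsto (fun n : ℕ ↦ √(n * x) / n) atTop (𝓝 0) := by
  have h := (Real.continuous_sqrt.tendsto 0).comp (tendsto_const_div_atTop_nhds_zero_nat x)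
  rw [Real.sqrt_zero] at h
  refine h.congr' ?_
  filter_upwards [eventually_gt_atTop 0] with n hn
  have hn' : (0 : ℝ) < n := Nat.cast_pos.2 hn
  rw [Function.comp_apply, show x / n = n * x / n ^ 2 by field_simp,
    Real.sqrt_div' _ (by positivity), Real.sqrt_sq hn'.le]

theorem tendsto_sum_Ico_floor_sqrt_pW {x : ℝ} (hx : 0 ≤ x) :
    Tendsto (fun n : ℕ ↦ ∑ k ∈ Ico (⌊√(n * x)⌋₊ + 1) (n + 1), pW n k) atTop
      (𝓝 (Real.exp (-x))) := by
  set j : ℕ → ℕ := fun n ↦ ⌊√(n * x)⌋₊ + 1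
  have hs := tendsto_sqrt_natCast_mul_div x
  have hj_gt (n : ℕ) : √(n * x) < j n := by simpa [j] using Nat.lt_floor_add_one (√(n * x))
  have hj_le (n : ℕ) : (j n : ℝ) ≤ √(n * x) + 1 := by
    simpa [j] using Nat.floor_le (Real.sqrt_nonneg (n * x))
  have hbound (n : ℕ) :
      n * x - √(n * x) ≤ j n * (j n - 1 : ℝ) ∧ j n * (j n - 1 : ℝ) ≤ n * x + √(n * x) := by
    have hsq : √(n * x) ^ 2 = n * x := Real.sq_sqrt (by positivity)
    have hj1 : (1 : ℝ) ≤ j n := by simp [j]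
    have := hj_gt n
    have := hj_le n
    have := Real.sqrt_nonneg (n * x)
    constructor <;> nlinarith
  have hj : Tendsto (fun n : ℕ ↦ (j n : ℝ) * (j n - 1) / n) atTop (𝓝 x) := by
    have hlow := (tendsto_const_nhds (x := x)).sub hs
    have hhigh := (tendsto_const_nhds (x := x)).add hs
    rw [sub_zero] at hlow
    rw [add_zero] at hhigh
    refine tendsto_of_tendsto_of_tendsto_of_le_of_le' hlow hhigh ?_ ?_ <;>
      filter_upwards [eventually_gt_atTop 0] with n hn
    · calc x - √(n * x) / n = (n * x - √(n * x)) / n := by field_simp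
        _ ≤ _ := by gcongr; exact (hbound n).1
    · calc (j n : ℝ) * (j n - 1) / n ≤ (n * x + √(n * x)) / n := by gcongr; exact (hbound n).2
        _ = x + √(n * x) / n := by field_simp
  have hj' : Tendsto (fun n : ℕ ↦ (j n : ℝ) / n) atTop (𝓝 0) := by
    have hhigh := hs.add (tendsto_one_div_atTop_nhds_zero_nat (𝕜 := ℝ))
    rw [add_zero] at hhigh
    refine tendsto_of_tendsto_of_tendsto_of_le_of_le tendsto_const_nhds hhigh
      (fun n ↦ by positivity) fun n ↦ ?_
    rw [← add_div]
    exact div_le_div_of_nonneg_right (hj_le n) n.cast_nonneg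
  refine (tendsto_prod_range_sub_div_add hj hj').congr' ?_
  filter_upwards [eventually_ne_atTop 0] with n hn
  exact (sum_Ico_pW_eq_prod hn (j n)).symm

theorem pW_nonneg (n k : ℕ) : 0 ≤ pW n k := by
  unfold pW
  positivity

noncomputable def scaledSqLaw (n : ℕ) : Measure ℝ :=
  ∑ k ∈ range (n + 1), ENNReal.ofReal (pW n k) • Measure.dirac ((k : ℝ) ^ 2 / n)

theorem isProbabilityMeasure_scaledSqLaw {n : ℕ} (hn : n ≠ 0) :
    IsProbabilityMeasure (scaledSqLaw n) := by
  constructor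
  simp [scaledSqLaw, ← ENNReal.ofReal_sum_of_nonneg fun k _ ↦ pW_nonneg n k, sum_range_pW hn]

theorem integral_scaledSqLaw (n : ℕ) (f : ℝ → ℝ) :
    ∫ x, f x ∂scaledSqLaw n = ∑ k ∈ range (n + 1), pW n k * f ((k : ℝ) ^ 2 / n) := by
  rw [scaledSqLaw, integral_finsetSum_measure fun k _ ↦
    (integrable_dirac (by simp)).smul_measure ENNReal.ofReal_ne_top]
  simp [ENNReal.toReal_ofReal (pW_nonneg n _)]

theorem cdf_scaledSqLaw {n : ℕ} (hn : n ≠ 0) (x : ℝ) :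
    cdf (scaledSqLaw n) x = ∑ k ∈ range (n + 1) with ((k : ℕ) : ℝ) ^ 2 / n ≤ x, pW n k := by
  have := isProbabilityMeasure_scaledSqLaw hn
  rw [cdf_eq_real, ← integral_indicator_one measurableSet_Iic, integral_scaledSqLaw, sum_filter]
  refine sum_congr rfl fun k _ ↦ ?_
  by_cases h : (k : ℝ) ^ 2 / n ≤ x <;> simp [h]

theorem cdf_scaledSqLaw_of_neg {n : ℕ} (hn : n ≠ 0) {x : ℝ} (hx : x < 0) :
    cdf (scaledSqLaw n) x = 0 := by
  rw [cdf_scaledSqLaw hn, sum_eq_zero]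
  intro k hk
  have : 0 ≤ (k : ℝ) ^ 2 / n := by positivity
  linarith [(mem_filter.1 hk).2]

theorem cdf_scaledSqLaw_of_nonneg {n : ℕ} (hn : n ≠ 0) {x : ℝ} (hx : 0 ≤ x) :
    cdf (scaledSqLaw n) x = 1 - ∑ k ∈ Ico (⌊√(n * x)⌋₊ + 1) (n + 1), pW n k := by
  have hfilter :
      {k ∈ range (n + 1) | ¬ ((k : ℕ) : ℝ) ^ 2 / n ≤ x} = Ico (⌊√(n * x)⌋₊ + 1) (n + 1) := by
    ext k
    have hk : (k : ℝ) ^ 2 / n ≤ x ↔ k ≤ ⌊√(n * x)⌋₊ := by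
      rw [Nat.le_floor_iff (Real.sqrt_nonneg _), Real.le_sqrt (by positivity) (by positivity),
        div_le_iff₀ (by positivity), mul_comm]
    simp only [mem_filter, mem_range, mem_Ico, hk]
    omega
  rw [cdf_scaledSqLaw hn, ← sum_range_pW hn, ← sum_filter_add_sum_filter_not (range (n + 1))
    (fun k : ℕ ↦ (k : ℝ) ^ 2 / n ≤ x), hfilter, add_sub_cancel_right]

theorem tendsto_cdf_scaledSqLaw (x : ℝ) :
    Tendsto (fun n ↦ cdf (scaledSqLaw n) x) atTop (𝓝 (cdf (expMeasure 1) x)) := by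
  rw [cdf_expMeasure_eq one_pos, one_mul]
  split_ifs with hx
  · refine ((tendsto_sum_Ico_floor_sqrt_pW hx).const_sub 1).congr' ?_
    filter_upwards [eventually_ne_atTop 0] with n hn
    exact (cdf_scaledSqLaw_of_nonneg hn hx).symm
  · refine tendsto_const_nhds.congr' ?_
    filter_upwards [eventually_ne_atTop 0] with n hn
    exact (cdf_scaledSqLaw_of_neg hn (not_le.1 hx)).symm

/-- Lemma 4.1: the law of `W_n²/n` converges weakly to `Exp(1)` as `n → ∞`,
expressed via bounded continuous test functions. -/
theorem stmt_12 (f : BoundedContinuousFunction ℝ ℝ) :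
    Tendsto (fun n : ℕ => ∑ k ∈ Finset.range (n + 1), pW n k * f ((k : ℝ) ^ 2 / n))
      atTop (𝓝 (∫ x, f x ∂(expMeasure 1))) := by
  let μ : ℕ → ProbabilityMeasure ℝ := fun n ↦
    ⟨scaledSqLaw (n + 1), isProbabilityMeasure_scaledSqLaw n.succ_ne_zero⟩
  let ν : ProbabilityMeasure ℝ := ⟨expMeasure 1, isProbabilityMeasure_expMeasure one_pos⟩
  have hμν : Tendsto μ atTop (𝓝 ν) := ProbabilityMeasure.tendsto_of_tendsto_cdf fun x ↦
    (tendsto_add_atTop_iff_nat 1).2 (tendsto_cdf_scaledSqLaw x)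
  rw [← tendsto_add_atTop_iff_nat 1]
  simpa [μ, ν, integral_scaledSqLaw] using
    ProbabilityMeasure.tendsto_iff_forall_integral_tendsto.1 hμν f
end

section
/- For each integer n ≥ 1, let W_n be a random variable on {0, 1, …, n} with P(W_n = k) = c_n · k · C(2n, n−k), where c_n = 2/(n·C(2n, n)). Fix s ≥ 0 and let k_n = ⌊√(s n)⌋. Then the conditional law of W_n²/n given the event {W_n ≥ k_n} converges weakly, as n → ∞, to the law of s + X where X is exponential with rate 1 (equivalently, to the law of an Exp(1) variable conditioned to be at least s). -/
/-!
Since `pW n k = (2k/n) · C(2n, n-k)/C(2n, n)` and the binomial ratio satisfies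
`exp (-k²/(n+1-k)) ≤ C(2n, n-k)/C(2n, n) ≤ exp (-k²/(n+k))`, the weight at `k ≈ √(xn)` is
`(2k+1)/n · e^{-x} (1 + o(1))`. So `∑_{k ≥ ⌊√(sn)⌋} pW n k f(k²/n)` is the integral of a step
function on the grid `k²/n` (cells of length `(2k+1)/n`) which converges to `𝟙_{x>s} e^{-x} f(x)`
and is dominated by `C e^{-x/4}`; by dominated convergence the sum tends to `∫_s^∞ e^{-x} f(x) dx`.
With `f = 1` the denominator tends to `e^{-s}`, and `e^{s} ∫_s^∞ e^{-x} f(x) dx = E f(s + X)`.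
-/

open MeasureTheory ProbabilityTheory Topology Filter

open Real Set
open scoped BoundedContinuousFunction

noncomputable def centralRatio (n k : ℕ) : ℝ :=
  ((2 * n).choose (n - k) : ℝ) / ((2 * n).choose n : ℝ)

lemma centralRatio_pos (n k : ℕ) : 0 < centralRatio n k := by
  unfold centralRatio
  exact div_pos (mod_cast Nat.choose_pos (by omega)) (mod_cast Nat.choose_pos (by omega))

lemma centralRatio_zero (n : ℕ) : centralRatio n 0 = 1 :=
  div_self (mod_cast (Nat.choose_pos (by omega)).ne')

lemma pW_eq_mul_centralRatio (n k : ℕ) : pW n k = 2 * k / n * centralRatio n k := by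
  unfold pW centralRatio
  ring

lemma centralRatio_succ {n k : ℕ} (hk : k < n) :
    centralRatio n (k + 1) = centralRatio n k * ((n - k) / (n + k + 1)) := by
  have h := congrArg (Nat.cast (R := ℝ)) (Nat.choose_succ_right_eq (2 * n) (n - (k + 1)))
  rw [show n - (k + 1) + 1 = n - k by omega, show 2 * n - (n - (k + 1)) = n + k + 1 by omega] at h
  push_cast [hk.le] at h
  have hC : ((2 * n).choose n : ℝ) ≠ 0 := mod_cast (Nat.choose_pos (by omega)).ne'
  unfold centralRatio
  field_simp
  linear_combination -h

lemma centralRatio_le_exp {n k : ℕ} (hk : k ≤ n) :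
    centralRatio n k ≤ exp (-(k ^ 2 / (n + k))) := by
  induction k with
  | zero => simp [centralRatio_zero]
  | succ k ih =>
    have hkn : (k : ℝ) < n := by exact_mod_cast hk
    have hstep : ((n : ℝ) - k) / (n + k + 1) ≤ exp (-((2 * k + 1) / (n + k + 1))) := by
      convert add_one_le_exp (-((2 * (k : ℝ) + 1) / (n + k + 1))) using 1
      field_simp
      ring
    have hsq : (k : ℝ) ^ 2 / (n + k + 1) ≤ k ^ 2 / (n + k) :=
      div_le_div_of_nonneg_left (by positivity) (by linarith) (by linarith)
    calc centralRatio n (k + 1) = centralRatio n k * ((n - k) / (n + k + 1)) :=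
          centralRatio_succ hk
      _ ≤ exp (-(k ^ 2 / (n + k))) * exp (-((2 * k + 1) / (n + k + 1))) :=
          mul_le_mul (ih (by omega)) hstep (div_nonneg (by linarith) (by positivity)) (exp_nonneg _)
      _ ≤ exp (-(((k + 1 : ℕ) : ℝ) ^ 2 / (n + (k + 1 : ℕ)))) := by
          rw [← exp_add, exp_le_exp]
          have hsplit : ((k : ℝ) + 1) ^ 2 / (n + (k + 1)) =
              k ^ 2 / (n + k + 1) + (2 * k + 1) / (n + k + 1) := by
            field_simp; ring
          push_cast
          linarith

lemma exp_le_centralRatio {n k : ℕ} (hk : k ≤ n) :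
    exp (-(k ^ 2 / (n + 1 - k))) ≤ centralRatio n k := by
  induction k with
  | zero => simp [centralRatio_zero]
  | succ k ih =>
    have hkn : (k : ℝ) < n := by exact_mod_cast hk
    have hd : (0 : ℝ) < n - k := by linarith
    have hstep : exp (-((2 * k + 1) / (n - k))) ≤ ((n : ℝ) - k) / (n + k + 1) := by
      rw [exp_neg, inv_le_comm₀ (exp_pos _) (by positivity), inv_div]
      calc ((n : ℝ) + k + 1) / (n - k) = (2 * k + 1) / (n - k) + 1 := by field_simp; ring
        _ ≤ _ := add_one_le_exp _
    have hsq : (k : ℝ) ^ 2 / (n + 1 - k) ≤ k ^ 2 / (n - k) :=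
      div_le_div_of_nonneg_left (by positivity) hd (by linarith)
    calc exp (-(((k + 1 : ℕ) : ℝ) ^ 2 / (n + 1 - (k + 1 : ℕ))))
        ≤ exp (-(k ^ 2 / (n + 1 - k))) * exp (-((2 * k + 1) / (n - k))) := by
          rw [← exp_add, exp_le_exp]
          have hsplit : ((k : ℝ) + 1) ^ 2 / (n + 1 - (k + 1)) =
              k ^ 2 / (n - k) + (2 * k + 1) / (n - k) := by
            rw [show (n : ℝ) + 1 - (k + 1) = n - k by ring]; field_simp; ring
          push_cast
          linarith
      _ ≤ centralRatio n k * ((n - k) / (n + k + 1)) :=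
          mul_le_mul (ih (by omega)) hstep (exp_nonneg _) (centralRatio_pos n k).le
      _ = centralRatio n (k + 1) := (centralRatio_succ hk).symm

lemma tendsto_centralRatio {k : ℕ → ℕ} {x : ℝ}
    (hk : Tendsto (fun n => (k n : ℝ) ^ 2 / n) atTop (𝓝 x)) :
    Tendsto (fun n => centralRatio n (k n)) atTop (𝓝 (exp (-x))) := by
  have hkn : Tendsto (fun n => (k n : ℝ) / n) atTop (𝓝 0) := by
    have hsq : Tendsto (fun n : ℕ => ((k n : ℝ) / n) ^ 2) atTop (𝓝 0) := by
      have hprod := hk.mul (tendsto_inv_atTop_nhds_zero_nat (𝕜 := ℝ))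
      rw [mul_zero] at hprod
      exact hprod.congr fun n => by ring
    simpa [sqrt_sq (div_nonneg (Nat.cast_nonneg _) (Nat.cast_nonneg _))] using hsq.sqrt
  have hle : ∀ᶠ n in atTop, 0 < n ∧ k n ≤ n := by
    filter_upwards [eventually_gt_atTop 0, hkn.eventually (gt_mem_nhds one_pos)] with n hn hlt
    refine ⟨hn, ?_⟩
    rw [div_lt_one (by positivity)] at hlt
    exact_mod_cast hlt.le
  have hlower : Tendsto (fun n => exp (-((k n : ℝ) ^ 2 / n / (1 + 1 / n - k n / n))))
      atTop (𝓝 (exp (-x))) := by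
    simpa using ((hk.div ((tendsto_const_nhds.add tendsto_one_div_atTop_nhds_zero_nat).sub hkn)
      (by norm_num : (1 : ℝ) + 0 - 0 ≠ 0)).neg.rexp)
  have hupper : Tendsto (fun n => exp (-((k n : ℝ) ^ 2 / n / (1 + k n / n))))
      atTop (𝓝 (exp (-x))) := by
    simpa using (hk.div (tendsto_const_nhds.add hkn) (by norm_num : (1 : ℝ) + 0 ≠ 0)).neg.rexp
  refine tendsto_of_tendsto_of_tendsto_of_le_of_le' hlower hupper ?_ ?_
  · filter_upwards [hle] with n ⟨hn, hkn⟩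
    have hn' : (0 : ℝ) < n := by exact_mod_cast hn
    rw [show (k n : ℝ) ^ 2 / n / (1 + 1 / n - k n / n) = (k n) ^ 2 / (n + 1 - k n) by
      field_simp]
    exact exp_le_centralRatio hkn
  · filter_upwards [hle] with n ⟨hn, hkn⟩
    have hn' : (0 : ℝ) < n := by exact_mod_cast hn
    rw [show (k n : ℝ) ^ 2 / n / (1 + k n / n) = (k n) ^ 2 / (n + k n) by field_simp]
    exact centralRatio_le_exp hkn

lemma tendsto_floor_sqrt_mul_sq_div {x : ℝ} (hx : 0 ≤ x) :
    Tendsto (fun n : ℕ => (⌊√(x * n)⌋₊ : ℝ) ^ 2 / n) atTop (𝓝 x) := by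
  have hinv : Tendsto (fun n : ℕ => (√n)⁻¹) atTop (𝓝 0) := by
    simpa using (tendsto_inv_atTop_nhds_zero_nat (𝕜 := ℝ)).sqrt
  have hlin : Tendsto (fun n : ℕ => (⌊√(x * n)⌋₊ : ℝ) / √n) atTop (𝓝 (√x)) := by
    refine tendsto_of_tendsto_of_tendsto_of_le_of_le' (by simpa using tendsto_const_nhds.sub hinv)
      tendsto_const_nhds ?_ ?_
    all_goals
      filter_upwards [eventually_gt_atTop 0] with n hn
      have hsn : 0 < √(n : ℝ) := sqrt_pos.2 (by exact_mod_cast hn)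
      rw [sqrt_mul hx] 
    · rw [le_div_iff₀ hsn, sub_mul, inv_mul_cancel₀ hsn.ne']
      linarith [Nat.lt_floor_add_one (√x * √n)]
    · rw [div_le_iff₀ hsn]
      exact Nat.floor_le (by positivity)
  convert hlin.pow 2 using 2 with n
  · rw [div_pow, sq_sqrt (Nat.cast_nonneg _)]
  · rw [sq_sqrt hx]

lemma centralRatio_le_exp_of_lt {n k : ℕ} {x : ℝ} (hn : 0 < n) (hk : k ≤ n)
    (hx : x * n < (k + 1) ^ 2) : centralRatio n k ≤ exp (1 / 2 - x / 4) := by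
  have hn' : (0 : ℝ) < n := by exact_mod_cast hn
  have hkn : (k : ℝ) ≤ n := by exact_mod_cast hk
  refine (centralRatio_le_exp hk).trans (exp_le_exp.2 ?_)
  have h2n : (k : ℝ) ^ 2 / (2 * n) ≤ k ^ 2 / (n + k) :=
    div_le_div_of_nonneg_left (by positivity) (by positivity) (by linarith)
  have hx' : x / 4 - 1 / 2 ≤ (k : ℝ) ^ 2 / (2 * n) := by
    rw [le_div_iff₀ (by positivity)]
    have hn1 : (1 : ℝ) ≤ n := by exact_mod_cast hn
    nlinarith [sq_nonneg ((k : ℝ) - 1)]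
  linarith

noncomputable def sqGridStep (n : ℕ) (S : Finset ℕ) (a : ℕ → ℝ) (x : ℝ) : ℝ :=
  ∑ k ∈ S, (Ico ((k : ℝ) ^ 2 / n) ((k + 1) ^ 2 / n)).indicator (fun _ => a k) x

lemma mem_Ico_sq_div_iff {n k : ℕ} {x : ℝ} (hn : 0 < n) :
    x ∈ Ico ((k : ℝ) ^ 2 / n) ((k + 1) ^ 2 / n) ↔ 0 ≤ x ∧ ⌊√(x * n)⌋₊ = k := by
  have hn' : (0 : ℝ) < n := by exact_mod_cast hn
  by_cases hx : 0 ≤ x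
  · rw [Nat.floor_eq_iff (sqrt_nonneg _), le_sqrt (Nat.cast_nonneg _) (by positivity),
      sqrt_lt' (by positivity), mem_Ico, div_le_iff₀ hn', lt_div_iff₀ hn']
    exact (and_iff_right hx).symm
  · simp only [hx, false_and, iff_false, mem_Ico, not_and]
    exact fun hlo => absurd (le_trans (by positivity) hlo) hx

lemma sqGridStep_apply {n : ℕ} (hn : 0 < n) (S : Finset ℕ) (a : ℕ → ℝ) (x : ℝ) :
    sqGridStep n S a x = if 0 ≤ x ∧ ⌊√(x * n)⌋₊ ∈ S then a ⌊√(x * n)⌋₊ else 0 := by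
  simp only [sqGridStep, indicator_apply, mem_Ico_sq_div_iff hn]
  by_cases hx : 0 ≤ x
  · simp [hx, Finset.sum_ite_eq]
  · simp [hx]

lemma measurable_sqGridStep (n : ℕ) (S : Finset ℕ) (a : ℕ → ℝ) :
    Measurable (sqGridStep n S a) :=
  Finset.measurable_sum _ fun _ _ => measurable_const.indicator measurableSet_Ico

lemma integral_sqGridStep {n : ℕ} (hn : 0 < n) (S : Finset ℕ) (a : ℕ → ℝ) :
    ∫ x, sqGridStep n S a x = ∑ k ∈ S, a k * ((2 * k + 1) / n) := by
  have hn' : (0 : ℝ) < n := by exact_mod_cast hn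
  unfold sqGridStep
  rw [integral_finsetSum _ fun k _ =>
    (integrable_indicator_iff measurableSet_Ico).2 (integrableOn_const measure_Ico_lt_top.ne)]
  refine Finset.sum_congr rfl fun k _ => ?_
  have hlen : ((k : ℝ) + 1) ^ 2 / n - k ^ 2 / n = (2 * k + 1) / n := by field_simp; ring
  rw [integral_indicator measurableSet_Ico, setIntegral_const, measureReal_def, volume_Ico, hlen,
    ENNReal.toReal_ofReal (by positivity), smul_eq_mul, mul_comm]

lemma eventually_floor_sqrt_mul_le_self (x : ℝ) : ∀ᶠ n : ℕ in atTop, ⌊√(x * n)⌋₊ ≤ n := by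
  filter_upwards [tendsto_natCast_atTop_atTop.eventually_ge_atTop x] with n hn
  refine Nat.floor_le_of_le ((sqrt_le_left (Nat.cast_nonneg _)).2 ?_)
  nlinarith [(Nat.cast_nonneg n : (0 : ℝ) ≤ n)]

lemma eventually_floor_sqrt_mul_lt {x s : ℝ} (hx : 0 ≤ x) (hxs : x < s) :
    ∀ᶠ n : ℕ in atTop, ⌊√(x * n)⌋₊ < ⌊√(s * n)⌋₊ := by
  have hgap : Tendsto (fun n : ℕ => (√s - √x) * √n) atTop atTop :=
    (tendsto_sqrt_atTop.comp tendsto_natCast_atTop_atTop).const_mul_atTop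
      (sub_pos.2 (sqrt_lt_sqrt hx hxs))
  filter_upwards [hgap.eventually_ge_atTop 1] with n hn
  rw [Nat.floor_lt (sqrt_nonneg _), sqrt_mul hx, sqrt_mul (hx.trans hxs.le)]
  linarith [Nat.lt_floor_add_one (√s * √n)]

/-- On the cell `[k²/n, (k+1)²/n)`, of length `(2k+1)/n`, the value is
`pW n k * f (k²/n) / ((2k+1)/n)`, so that the integral is the tail sum of `pW n k * f (k²/n)`. -/
noncomputable def tailStep (s : ℝ) (f : ℝ →ᵇ ℝ) (n : ℕ) : ℝ → ℝ :=
  sqGridStep n (Finset.Icc ⌊√(s * n)⌋₊ n) fun k =>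
    k / (k + 1 / 2) * centralRatio n k * f (k ^ 2 / n)

lemma integral_tailStep (s : ℝ) (f : ℝ →ᵇ ℝ) {n : ℕ} (hn : 0 < n) :
    ∫ x, tailStep s f n x = ∑ k ∈ Finset.Icc ⌊√(s * n)⌋₊ n, pW n k * f (k ^ 2 / n) := by
  rw [tailStep, integral_sqGridStep hn]
  refine Finset.sum_congr rfl fun k _ => ?_
  rw [pW_eq_mul_centralRatio]
  field_simp

lemma abs_tailStep_le (s : ℝ) (f : ℝ →ᵇ ℝ) {n : ℕ} (hn : 0 < n) (x : ℝ) :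
    |tailStep s f n x| ≤ (Ici 0).indicator (fun x => ‖f‖ * exp (1 / 2 - x / 4)) x := by
  rw [tailStep, sqGridStep_apply hn]
  split_ifs with h
  · obtain ⟨hx, hk⟩ := h
    set k := ⌊√(x * n)⌋₊
    have hxk : x * n < (k + 1) ^ 2 :=
      (sqrt_lt' (by positivity)).1 (Nat.lt_floor_add_one _)
    have hweight : (k : ℝ) / (k + 1 / 2) ≤ 1 := div_le_one_of_le₀ (by linarith) (by positivity)
    rw [indicator_of_mem (mem_Ici.2 hx), abs_mul, abs_mul, abs_of_nonneg (by positivity),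
      abs_of_pos (centralRatio_pos n k), mul_comm]
    calc |f (k ^ 2 / n)| * (k / (k + 1 / 2) * centralRatio n k)
        ≤ ‖f‖ * (1 * exp (1 / 2 - x / 4)) :=
          mul_le_mul (f.norm_coe_le_norm _) (mul_le_mul hweight
            (centralRatio_le_exp_of_lt hn (Finset.mem_Icc.1 hk).2 hxk)
            (centralRatio_pos n k).le zero_le_one)
            (mul_nonneg (by positivity) (centralRatio_pos n k).le) (norm_nonneg _)
      _ = ‖f‖ * exp (1 / 2 - x / 4) := by rw [one_mul]
  · rw [abs_zero]
    exact indicator_nonneg (fun _ _ => by positivity) x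

lemma integrable_tailStep_bound (f : ℝ →ᵇ ℝ) :
    Integrable ((Ici 0).indicator fun x => ‖f‖ * exp (1 / 2 - x / 4)) := by
  rw [integrable_indicator_iff measurableSet_Ici, integrableOn_Ici_iff_integrableOn_Ioi]
  refine IntegrableOn.congr_fun ((exp_neg_integrableOn_Ioi 0 (by norm_num : (0 : ℝ) < 1 / 4)).const_mul
    (‖f‖ * exp (1 / 2))) (fun x _ => ?_) measurableSet_Ioi
  rw [mul_assoc, ← exp_add]
  ring_nf

lemma tendsto_tailStep {s : ℝ} (hs : 0 ≤ s) (f : ℝ →ᵇ ℝ) {x : ℝ} (hxs : x ≠ s) :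
    Tendsto (fun n => tailStep s f n x) atTop
      (𝓝 ((Ioi s).indicator (fun x => exp (-x) * f x) x)) := by
  rcases hxs.lt_or_gt with hxs | hxs
  · rw [indicator_of_notMem (show x ∉ Ioi s from not_lt.2 hxs.le)]
    refine tendsto_const_nhds.congr' ?_
    have hout : ∀ᶠ n : ℕ in atTop, ¬(0 ≤ x ∧ ⌊√(x * n)⌋₊ ∈ Finset.Icc ⌊√(s * n)⌋₊ n) := by
      by_cases hx : 0 ≤ x
      · filter_upwards [eventually_floor_sqrt_mul_lt hx hxs] with n hn
        exact fun h => (Finset.mem_Icc.1 h.2).1.not_gt hn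
      · exact .of_forall fun _ h => hx h.1
    filter_upwards [eventually_gt_atTop 0, hout] with n hn hout
    rw [tailStep, sqGridStep_apply hn, if_neg hout]
  · have hx : 0 < x := hs.trans_lt hxs
    set k := fun n : ℕ => ⌊√(x * n)⌋₊
    have hsq := tendsto_floor_sqrt_mul_sq_div hx.le
    have hweight : Tendsto (fun n => (k n : ℝ) / (k n + 1 / 2)) atTop (𝓝 1) :=
      (tendsto_natCast_div_add_atTop (1 / 2 : ℝ)).comp (tendsto_nat_floor_atTop.comp
        (tendsto_sqrt_atTop.comp (tendsto_natCast_atTop_atTop.const_mul_atTop hx)))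
    rw [indicator_of_mem (mem_Ioi.2 hxs), ← one_mul (exp (-x))]
    refine ((hweight.mul (tendsto_centralRatio hsq)).mul
      ((f.continuous.tendsto x).comp hsq)).congr' ?_
    filter_upwards [eventually_gt_atTop 0, eventually_floor_sqrt_mul_le_self x] with n hn hkn
    have hsk : ⌊√(s * n)⌋₊ ≤ k n := Nat.floor_le_floor (sqrt_le_sqrt (by gcongr))
    rw [tailStep, sqGridStep_apply hn, if_pos ⟨hx.le, Finset.mem_Icc.2 ⟨hsk, hkn⟩⟩]
    rfl

lemma tendsto_sum_pW_mul {s : ℝ} (hs : 0 ≤ s) (f : ℝ →ᵇ ℝ) :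
    Tendsto (fun n : ℕ => ∑ k ∈ Finset.Icc ⌊√(s * n)⌋₊ n, pW n k * f (k ^ 2 / n)) atTop
      (𝓝 (∫ x in Ioi s, exp (-x) * f x)) := by
  have hdom := tendsto_integral_filter_of_dominated_convergence _
    (.of_forall fun n => (measurable_sqGridStep _ _ _).aestronglyMeasurable)
    ((eventually_gt_atTop 0).mono fun n hn => ae_of_all _ fun x => abs_tailStep_le s f hn x)
    (integrable_tailStep_bound f)
    ((volume.ae_ne s).mono fun x hx => tendsto_tailStep hs f hx)
  rw [integral_indicator measurableSet_Ioi] at hdom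
  exact hdom.congr' ((eventually_gt_atTop 0).mono fun n hn => integral_tailStep s f hn)

lemma integral_expMeasure_one_comp_add (s : ℝ) (g : ℝ → ℝ) :
    ∫ x, g (s + x) ∂expMeasure 1 = exp s * ∫ x in Ioi s, exp (-x) * g x := by
  have hdensity : ∀ x, (gammaPDF 1 1 x).toReal • g (s + x) =
      (Ici 0).indicator (fun x => exp (-x) * g (s + x)) x := by
    intro x
    by_cases hx : 0 ≤ x
    · simp [gammaPDF_eq, hx, (exp_pos _).le]
    · simp [gammaPDF_eq, hx]
  have hshift := (measurePreserving_add_left volume s).setIntegral_preimage_emb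
    (measurableEmbedding_addLeft s) (fun x => exp s * (exp (-x) * g x)) (Ioi s)
  rw [preimage_const_add_Ioi, sub_self] at hshift
  have hmeas : Measurable (gammaPDF 1 1) := (measurable_gammaPDFReal 1 1).ennreal_ofReal
  rw [expMeasure, gammaMeasure, integral_withDensity_eq_integral_toReal_smul hmeas
    (ae_of_all _ fun _ => ENNReal.ofReal_lt_top)]
  simp_rw [hdensity]
  rw [integral_indicator measurableSet_Ici, integral_Ici_eq_integral_Ioi, ← integral_const_mul,
    ← hshift]
  refine setIntegral_congr_fun measurableSet_Ioi fun x _ => ?_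
  simp only [neg_add, exp_add, exp_neg]
  field_simp

/-- Convergence (4.12)/(eqn:p1): for fixed `s ≥ 0` and `k_n = ⌊√(sn)⌋`, the
conditional law of `W_n²/n` given `{W_n ≥ k_n}` converges weakly to the law of
`s + X`, `X ~ Exp(1)`, expressed via bounded continuous test functions. -/
theorem stmt_13 (s : ℝ) (hs : 0 ≤ s) (f : BoundedContinuousFunction ℝ ℝ) :
    Tendsto
      (fun n : ℕ =>
        (∑ k ∈ Finset.Icc ⌊Real.sqrt (s * n)⌋₊ n, pW n k * f ((k : ℝ) ^ 2 / n)) /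
          (∑ k ∈ Finset.Icc ⌊Real.sqrt (s * n)⌋₊ n, pW n k))
      atTop (𝓝 (∫ x, f (s + x) ∂(expMeasure 1))) := by
  have hden := tendsto_sum_pW_mul hs (BoundedContinuousFunction.const ℝ 1)
  simp only [BoundedContinuousFunction.const_apply', mul_one, integral_exp_neg_Ioi] at hden
  have hlimit : ∫ x, f (s + x) ∂expMeasure 1 = (∫ x in Ioi s, exp (-x) * f x) / exp (-s) := by
    rw [integral_expMeasure_one_comp_add, exp_neg, div_inv_eq_mul, mul_comm]
  rw [hlimit]
  exact (tendsto_sum_pW_mul hs f).div hden (exp_pos _).ne'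
end

section
/- There exist constants c₁ ∈ (0,1) and N such that for every integer a ≥ N and every integer r ≥ 1, setting m = a + r, one has ∑_{y=1}^{∞} [ m/((m+y−1)(m+y)) ] · 1/√(a+y) ≤ c₁/√a. -/
open Filter Topology Finset

/-- The estimate (eqn:denominator) in Lemma 4.2: there are `c₁ ∈ (0,1)` and `N` such
that for all integers `a ≥ N` and `r ≥ 1`, with `m = a + r`,
`∑_{y=1}^∞ [m/((m+y-1)(m+y))]·1/√(a+y) ≤ c₁/√a` (below the summation index `y : ℕ`
corresponds to the value `y + 1 ≥ 1`). -/
theorem stmt_16 :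
    ∃ c₁ ∈ Set.Ioo (0 : ℝ) 1, ∃ N : ℕ, ∀ a : ℕ, N ≤ a → ∀ r : ℕ, 1 ≤ r →
      (∑' y : ℕ,
        (((a : ℝ) + r) / ((((a : ℝ) + r) + y) * (((a : ℝ) + r) + y + 1))) *
          (1 / Real.sqrt ((a : ℝ) + y + 1)))
        ≤ c₁ / Real.sqrt a := by
  have sqrt2_pos : (0:ℝ) < Real.sqrt 2 := Real.sqrt_pos.mpr (by norm_num)
  have sqrt2_gt : (1:ℝ) < Real.sqrt 2 := by
    nlinarith [Real.sq_sqrt (by norm_num : (0:ℝ) ≤ 2)]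
  refine ⟨1/2 + 1/(2*Real.sqrt 2), ⟨by positivity, by
    have h : 1/(2*Real.sqrt 2) < 1/2 := by
      rw [div_lt_div_iff₀ (by positivity) (by norm_num)]
      nlinarith
    linarith⟩, 1, ?_⟩
  intro a ha r hr
  have hA : (1:ℝ) ≤ (a:ℝ) := by exact_mod_cast ha
  set A : ℝ := (a:ℝ) with hAdef
  have hApos : 0 < A := by linarith
  have hsA : 0 < Real.sqrt A := Real.sqrt_pos.mpr hApos
  have hs2A : 0 < Real.sqrt (2*A) := Real.sqrt_pos.mpr (by linarith)
  set m : ℕ := a + r with hm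
  set M : ℝ := (m:ℝ) with hMdef
  have hMA : M = A + r := by rw [hMdef, hm]; push_cast; ring
  have hr1 : (1:ℝ) ≤ (r:ℝ) := by exact_mod_cast hr
  have hM1 : A + 1 ≤ M := by rw [hMA]; linarith
  have hMpos : 0 < M := by linarith
  have hMy : ∀ y : ℕ, (0:ℝ) < M + y := fun y => by
    have := Nat.cast_nonneg (α := ℝ) y; linarith
  set p : ℕ → ℝ := fun y => M/((M+y)*(M+y+1)) with hp
  set F : ℕ → ℝ := fun y => M/(M+y) with hF
  have hpF : ∀ y, p y = F y - F (y+1) := by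
    intro y
    have h1 := hMy y
    have h2 : (0:ℝ) < M + y + 1 := by linarith
    simp only [hp, hF]
    push_cast
    rw [div_sub_div _ _ (ne_of_gt h1) (by push_cast at h2 ⊢; linarith)]
    push_cast
    ring_nf
  have hppos : ∀ y, 0 ≤ p y := fun y => by
    have h1 := hMy y
    have h2 : (0:ℝ) < M + y + 1 := by linarith
    positivity
  have hFsum : ∀ n, ∑ y ∈ range n, p y = 1 - F n := by
    intro n
    rw [Finset.sum_congr rfl (fun y _ => hpF y), Finset.sum_range_sub' F n]
    simp [hF, div_self hMpos.ne']
  have hFm : F m = 1/2 := by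
    simp only [hF, ← hMdef]
    rw [div_eq_iff (by linarith)]
    ring
  -- the bounding function
  set c : ℕ → ℝ := fun y => if y < m then 1/Real.sqrt A else 1/Real.sqrt (2*A) with hc
  set g : ℕ → ℝ := fun y => p y * c y with hg
  have hgnn : ∀ y, 0 ≤ g y := by
    intro y
    apply mul_nonneg (hppos y)
    simp only [hc]
    split <;> positivity
  -- F n → 0
  have hF0 : Tendsto F atTop (𝓝 0) := by
    have h1 : Tendsto (fun n : ℕ => M + (n:ℝ)) atTop atTop :=
      tendsto_atTop_add_const_left _ _ tendsto_natCast_atTop_atTop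
    have h2 : Tendsto (fun n : ℕ => (M + (n:ℝ))⁻¹) atTop (𝓝 0) :=
      h1.inv_tendsto_atTop
    have := h2.const_mul M
    simpa [hF, div_eq_mul_inv] using this
  -- HasSum g S
  set S : ℝ := (1/2) * (1/Real.sqrt A) + (1/2) * (1/Real.sqrt (2*A)) with hS
  have hgsum : HasSum g S := by
    rw [hasSum_iff_tendsto_nat_of_nonneg hgnn]
    have heq : ∀ n, m ≤ n → ∑ y ∈ range n, g y
        = (1/2) * (1/Real.sqrt A) + (1/2 - F n) * (1/Real.sqrt (2*A)) := by
      intro n hn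
      rw [← Finset.sum_range_add_sum_Ico _ hn]
      have h1 : ∑ y ∈ range m, g y = (1/2) * (1/Real.sqrt A) := by
        have : ∀ y ∈ range m, g y = p y * (1/Real.sqrt A) := by
          intro y hy
          simp only [hg, hc, if_pos (Finset.mem_range.mp hy)]
        rw [Finset.sum_congr rfl this, ← Finset.sum_mul, hFsum, hFm]
        norm_num
      have h2 : ∑ y ∈ Finset.Ico m n, g y = (F m - F n) * (1/Real.sqrt (2*A)) := by
        have : ∀ y ∈ Finset.Ico m n, g y = p y * (1/Real.sqrt (2*A)) := by
          intro y hy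
          have : ¬ y < m := not_lt.mpr (Finset.mem_Ico.mp hy).1
          simp only [hg, hc, if_neg this]
        rw [Finset.sum_congr rfl this, ← Finset.sum_mul,
          Finset.sum_Ico_eq_sub _ hn, hFsum, hFsum, hFm]
        ring_nf
      rw [h1, h2, hFm]
    have hlim : Tendsto (fun n => (1/2) * (1/Real.sqrt A)
        + ((1:ℝ)/2 - F n) * (1/Real.sqrt (2*A))) atTop (𝓝 S) := by
      have h1 : Tendsto (fun n => (1:ℝ)/2 - F n) atTop (𝓝 (1/2 - 0)) :=
        tendsto_const_nhds.sub hF0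
      have := (h1.mul_const (1/Real.sqrt (2*A))).const_add ((1/2) * (1/Real.sqrt A))
      simpa [hS] using this
    refine hlim.congr' ?_
    filter_upwards [eventually_ge_atTop m] with n hn
    exact (heq n hn).symm
  -- termwise bound
  set f : ℕ → ℝ := fun y => p y * (1/Real.sqrt (A + y + 1)) with hf
  have hfnn : ∀ y, 0 ≤ f y := fun y => by
    have := hppos y; positivity
  have hfg : ∀ y, f y ≤ g y := by
    intro y
    apply mul_le_mul_of_nonneg_left _ (hppos y)
    simp only [hc]
    have hy0 : (0:ℝ) ≤ (y:ℝ) := Nat.cast_nonneg y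
    by_cases hcase : y < m
    · rw [if_pos hcase]
      apply one_div_le_one_div_of_le hsA
      apply Real.sqrt_le_sqrt; linarith
    · rw [if_neg hcase]
      have hym : (m:ℝ) ≤ (y:ℝ) := Nat.cast_le.mpr (not_lt.mp hcase)
      rw [← hMdef] at hym
      apply one_div_le_one_div_of_le hs2A
      apply Real.sqrt_le_sqrt; linarith
  -- the tsum in the statement equals tsum f
  have hrw : (fun y : ℕ =>
        (((a : ℝ) + r) / ((((a : ℝ) + r) + y) * (((a : ℝ) + r) + y + 1))) *
          (1 / Real.sqrt ((a : ℝ) + y + 1))) = f := by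
    funext y
    simp only [hf, hp, ← hAdef, ← hMA]
  rw [hrw]
  have hfsummable : Summable f :=
    hgsum.summable.of_nonneg_of_le hfnn hfg
  calc ∑' y, f y ≤ ∑' y, g y := Summable.tsum_le_tsum hfg hfsummable hgsum.summable
    _ = S := hgsum.tsum_eq
    _ = (1/2 + 1/(2*Real.sqrt 2)) / Real.sqrt A := by
        rw [hS, Real.sqrt_mul (by norm_num) A]
        field_simp
    _ = (1/2 + 1/(2*Real.sqrt 2)) / Real.sqrt a := by rw [hAdef]
end
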